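/- arXiv:2505.15598 — 6 statements merged into one kernel-verified Lean document; each statement's English description precedes it below -/
import Mathlib

section
/- Let A and B be categories and F : A ⥤ B a functor. Then F admits a right adjoint if and only if the projection p_B := Comma.snd F (𝟭 B) : F ↓ B ⥤ B is a lali, i.e. there exist a functor u : B ⥤ F ↓ B and an adjunction p_B ⊣ u whose counit is a natural isomorphism. -/
/-!
STATEMENT 0: A functor `F : A ⥤ B` admits a right adjoint iff the projection
`p_B := Comma.snd F (𝟭 B) : F ↓ B ⥤ B` is a lali, i.e. there is a functor
`u : B ⥤ F ↓ B` and an adjunction `p_B ⊣ u` whose counit is a natural isomorphism.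
-/

open CategoryTheory

theorem left_adjoint_iff_comma_snd_lali
    {A : Type*} {B : Type*} [Category A] [Category B] (F : A ⥤ B) :
    F.IsLeftAdjoint ↔
      ∃ (u : B ⥤ Comma F (𝟭 B)) (adj : Comma.snd F (𝟭 B) ⊣ u),
        IsIso adj.counit := by
  constructor
  · rintro ⟨G, ⟨adj⟩⟩
    let u' : B ⥤ Comma F (𝟭 B) :=
      { obj := fun b => { left := G.obj b, right := b, hom := adj.counit.app b }
        map := fun {b b'} f => { left := G.map f, right := f, w := by simp } }
    let adj' : Comma.snd F (𝟭 B) ⊣ u' := Adjunction.mkOfHomEquiv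
      { homEquiv := fun x c =>
          { toFun := fun f =>
              { left := adj.homEquiv x.left c (x.hom ≫ f)
                right := f
                w := by simp [u', Adjunction.homEquiv_unit] }
            invFun := fun m => m.right
            left_inv := fun f => rfl
            right_inv := fun m => by
              have hw := m.w
              simp only [Functor.id_obj, Functor.id_map] at hw
              ext
              · dsimp [u']
                rw [← hw]
                simp [u', Adjunction.homEquiv_unit]
              · rfl }
        homEquiv_naturality_left_symm := by intros; rfl
        homEquiv_naturality_right := by
          intro x b b' f g
          ext
          · dsimp [u']
            rw [← Category.assoc]
            exact adj.homEquiv_naturality_right _ _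
          · rfl }
    refine ⟨u', adj', ?_⟩
    have hc : ∀ c, adj'.counit.app c = 𝟙 c := fun c => by
      simp [adj', Adjunction.mkOfHomEquiv]; rfl
    have : ∀ c, IsIso (adj'.counit.app c) := fun c => by
      rw [hc c]; exact ⟨𝟙 c, Category.comp_id _, Category.comp_id _⟩
    exact NatIso.isIso_of_isIso_app _
  · rintro ⟨u, adj, hiso⟩
    refine ⟨u ⋙ Comma.fst F (𝟭 B), ⟨Adjunction.mkOfHomEquiv
      { homEquiv := fun a b =>
          { toFun := fun g =>
              (adj.unit.app ({ left := a, right := b, hom := g } : Comma F (𝟭 B))).left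
            invFun := fun h => F.map h ≫ (u.obj b).hom ≫ adj.counit.app b
            left_inv := fun g => by
              dsimp only
              have hw := (adj.unit.app
                ({ left := a, right := b, hom := g } : Comma F (𝟭 B))).w
              have ht := adj.left_triangle_components
                ({ left := a, right := b, hom := g } : Comma F (𝟭 B))
              simp only [Functor.comp_obj, Functor.id_obj, Functor.id_map,
                Comma.snd_obj, Comma.snd_map] at hw ht
              rw [← Category.assoc]; erw [hw]; rw [Category.assoc]; erw [ht]; erw [Category.comp_id]
            right_inv := fun h => by
              dsimp only
              have : IsIso (adj.counit.app b) := inferInstance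
              let g : F.obj a ⟶ b := F.map h ≫ (u.obj b).hom ≫ adj.counit.app b
              let m : ({ left := a, right := b, hom := g } : Comma F (𝟭 B)) ⟶ u.obj b :=
                { left := h
                  right := inv (adj.counit.app b)
                  w := by simp [g] }
              have key : m = adj.unit.app { left := a, right := b, hom := g } := by
                have h2 : m = (adj.homEquiv _ _) ((adj.homEquiv _ _).symm m) :=
                  (Equiv.apply_symm_apply _ _).symm
                rw [Adjunction.homEquiv_counit, Adjunction.homEquiv_unit] at h2
                have hsnd : (Comma.snd F (𝟭 B)).map m = inv (adj.counit.app b) := rfl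
                simp only [hsnd, IsIso.inv_hom_id, CategoryTheory.Functor.map_id,
                  Functor.comp_obj, Comma.snd_obj, Category.comp_id] at h2
                exact h2
              exact (congrArg CommaMorphism.left key.symm : _) }
        homEquiv_naturality_left_symm := by
          intro a' a b f g
          simp only [Equiv.coe_fn_symm_mk]
          rw [F.map_comp, Category.assoc]
        homEquiv_naturality_right := by
          intro a b b' g f
          simp only [Equiv.coe_fn_mk]
          let m : ({ left := a, right := b, hom := g } : Comma F (𝟭 B)) ⟶
              ({ left := a, right := b', hom := g ≫ f } : Comma F (𝟭 B)) :=
            { left := 𝟙 a, right := f, w := by simp }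
          have hnat := adj.unit.naturality m
          have h3 : (m ≫ adj.unit.app { left := a, right := b', hom := g ≫ f }).left =
              (adj.unit.app { left := a, right := b, hom := g } ≫
                ((Comma.snd F (𝟭 B)) ⋙ u).map m).left := by
            rw [← hnat]; rfl
          simp only [Comma.comp_left] at h3
          rw [Category.id_comp] at h3
          rw [h3]
          rfl }⟩⟩
end

section
/- Let F : A ⥤ B be a functor with an adjunction adj : F ⊣ U with counit E. Then the assignment b ↦ (U.obj b, b, E.app b : F.obj (U.obj b) ⟶ b) on objects and (g : b ⟶ b') ↦ (U.map g, g) on morphisms defines a functor u : B ⥤ F ↓ B with u ⋙ p_B = 𝟭 B, and there is an adjunction p_B ⊣ u whose counit is the identity natural transformation (in particular an isomorphism) and whose unit has component at an object (a, b, φ : F.obj a ⟶ b) of F ↓ B given by the pair (the adjunct φ^♯ : a ⟶ U.obj b of φ under adj, 𝟙 b). -/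
/-!
STATEMENT 1: Given an adjunction `adj : F ⊣ U` with counit `E`, the assignment
`b ↦ (U.obj b, b, E.app b)` and `(g : b ⟶ b') ↦ (U.map g, g)` defines a functor
`u : B ⥤ F ↓ B` with `u ⋙ p_B = 𝟭 B`, and there is an adjunction `p_B ⊣ u`
whose counit is the identity and whose unit at an object `(a, b, φ)` of `F ↓ B`
is the pair `(φ^♯, 𝟙 b)`, where `φ^♯` is the adjunct of `φ` under `adj`.
-/

open CategoryTheory

/-- The functor `B ⥤ F ↓ B` induced by an adjunction `F ⊣ U`, sending `b` to
`(U.obj b, b, counit.app b)`. -/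
def commaLift {A : Type*} {B : Type*} [Category A] [Category B]
    {F : A ⥤ B} {U : B ⥤ A} (adj : F ⊣ U) : B ⥤ Comma F (𝟭 B) where
  obj b :=
    { left := U.obj b
      right := b
      hom := adj.counit.app b }
  map {b b'} g :=
    { left := U.map g
      right := g
      w := adj.counit.naturality g }

def myAdj {A : Type*} {B : Type*} [Category A] [Category B]
    {F : A ⥤ B} {U : B ⥤ A} (adj : F ⊣ U) :
    Comma.snd F (𝟭 B) ⊣ commaLift adj :=
  Adjunction.mkOfUnitCounit
    { unit :=
        { app := fun X =>
            { left := (adj.homEquiv X.left X.right) X.hom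
              right := 𝟙 X.right
              w := by
                rw [Adjunction.homEquiv_unit]
                show F.map (adj.unit.app X.left ≫ U.map X.hom) ≫ adj.counit.app X.right
                  = X.hom ≫ 𝟙 X.right
                erw [F.map_comp, Category.assoc, adj.counit_naturality X.hom,
                  ← Category.assoc, adj.left_triangle_components, Category.id_comp,
                  Category.comp_id] }
          naturality := fun X Y f => by
            ext
            · show f.left ≫ (adj.homEquiv Y.left Y.right) Y.hom
                = (adj.homEquiv X.left X.right) X.hom ≫ U.map f.right
              rw [Adjunction.homEquiv_unit, Adjunction.homEquiv_unit, Category.assoc,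
                ← U.map_comp]
              have hw : F.map f.left ≫ Y.hom = X.hom ≫ (𝟭 B).map f.right := f.w
              rw [Functor.id_map] at hw
              rw [← Category.assoc, ← adj.unit_naturality f.left, Category.assoc,
                ← U.map_comp, hw]
            · show f.right ≫ 𝟙 Y.right = 𝟙 X.right ≫ f.right
              rw [Category.id_comp, Category.comp_id] }
      counit :=
        { app := fun b => 𝟙 b
          naturality := fun X Y f => by
            show f ≫ 𝟙 Y = 𝟙 X ≫ f
            rw [Category.id_comp, Category.comp_id] }
      left_triangle := by
        ext X
        dsimp
        simp [commaLift]
        exact Category.id_comp _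
      right_triangle := by
        ext b
        · dsimp
          simp [commaLift, Adjunction.homEquiv_unit]
          show (adj.homEquiv (U.obj b) b) (adj.counit.app b) ≫ U.map (𝟙 b) = 𝟙 (U.obj b)
          rw [CategoryTheory.Functor.map_id, Category.comp_id, Adjunction.homEquiv_unit, adj.right_triangle_components]
        · dsimp
          simp [commaLift] }

theorem comma_snd_lali_of_adjunction
    {A : Type*} {B : Type*} [Category A] [Category B]
    {F : A ⥤ B} {U : B ⥤ A} (adj : F ⊣ U) :
    commaLift adj ⋙ Comma.snd F (𝟭 B) = 𝟭 B ∧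
    ∃ adj' : Comma.snd F (𝟭 B) ⊣ commaLift adj,
      (∀ b : B, adj'.counit.app b = 𝟙 b) ∧
      ∀ X : Comma F (𝟭 B),
        (adj'.unit.app X).left = (adj.homEquiv X.left X.right) X.hom ∧
        (adj'.unit.app X).right = 𝟙 X.right := by
  refine ⟨rfl, myAdj adj, fun b => rfl, fun X => ⟨rfl, rfl⟩⟩
end

section
/- Let adj₁ : F₁ ⊣ U₁ (with F₁ : A₁ ⥤ B₁) and adj₂ : F₂ ⊣ U₂ (with F₂ : A₂ ⥤ B₂) be adjunctions of categories, and let γ : A₁ ⥤ A₂ and β : B₁ ⥤ B₂ be functors equipped with a natural isomorphism σ : γ ⋙ F₂ ≅ F₁ ⋙ β (the identity in the case of a strictly commuting square). Let β̄ : F₁ ↓ B₁ ⥤ F₂ ↓ B₂ be the induced functor sending an object (a, b, φ : F₁.obj a ⟶ b) to (γ.obj a, β.obj b, σ.hom.app a ≫ β.map φ) and a morphism (k, l) to (γ.map k, β.map l); then β̄ ⋙ p₂ = p₁ ⋙ β, where pᵢ := Comma.snd Fᵢ (𝟭 Bᵢ). Let uᵢ : Bᵢ ⥤ Fᵢ ↓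 Bᵢ be functors with adjunctions adjᵢ' : pᵢ ⊣ uᵢ (such adjunctions with invertible counit exist since each Fᵢ is a left adjoint). Then the mate mateEquiv adj₁ adj₂ σ.hom : U₁ ⋙ γ ⟶ β ⋙ U₂ is a natural isomorphism if and only if the mate mateEquiv adj₁' adj₂' of the identity 2-cell β̄ ⋙ p₂ ⟶ p₁ ⋙ β, namely the induced natural transformation u₁ ⋙ β̄ ⟶ β ⋙ u₂, is a natural isomorphism. -/
/-!
STATEMENT 3: Given adjunctions `adj₁ : F₁ ⊣ U₁`, `adj₂ : F₂ ⊣ U₂`, functors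
`γ : A₁ ⥤ A₂`, `β : B₁ ⥤ B₂` with a natural isomorphism `σ : γ ⋙ F₂ ≅ F₁ ⋙ β`,
the induced functor `β̄ : F₁ ↓ B₁ ⥤ F₂ ↓ B₂` satisfies `β̄ ⋙ p₂ = p₁ ⋙ β`, and
given adjunctions `adjᵢ' : pᵢ ⊣ uᵢ`, the mate of `σ.hom` is invertible iff the
mate of the identity 2-cell `β̄ ⋙ p₂ ⟶ p₁ ⋙ β` is invertible.
-/

open CategoryTheory

section

variable {A₁ B₁ A₂ B₂ : Type*} [Category A₁] [Category B₁] [Category A₂] [Category B₂]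

/-- The functor `F₁ ↓ B₁ ⥤ F₂ ↓ B₂` induced by `γ`, `β` and `σ : γ ⋙ F₂ ≅ F₁ ⋙ β`,
sending `(a, b, φ)` to `(γ.obj a, β.obj b, σ.hom.app a ≫ β.map φ)`. -/
@[simps]
def betaBar {F₁ : A₁ ⥤ B₁} {F₂ : A₂ ⥤ B₂} (γ : A₁ ⥤ A₂) (β : B₁ ⥤ B₂)
    (σ : γ ⋙ F₂ ≅ F₁ ⋙ β) : Comma F₁ (𝟭 B₁) ⥤ Comma F₂ (𝟭 B₂) where
  obj X :=
    { left := γ.obj X.left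
      right := β.obj X.right
      hom := σ.hom.app X.left ≫ β.map X.hom }
  map {X Y} f :=
    { left := γ.map f.left
      right := β.map f.right
      w := by
        have h₁ := σ.hom.naturality f.left
        have h₂ := f.w
        dsimp at h₁ h₂ ⊢
        rw [← Category.assoc, h₁, Category.assoc, ← β.map_comp, h₂, β.map_comp,
          Category.assoc] }

/-- The square `β̄ ⋙ p₂ = p₁ ⋙ β` commutes strictly. -/
lemma betaBar_comm {F₁ : A₁ ⥤ B₁} {F₂ : A₂ ⥤ B₂} (γ : A₁ ⥤ A₂) (β : B₁ ⥤ B₂)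
    (σ : γ ⋙ F₂ ≅ F₁ ⋙ β) :
    betaBar γ β σ ⋙ Comma.snd F₂ (𝟭 B₂) = Comma.snd F₁ (𝟭 B₁) ⋙ β :=
  rfl

end

universe v₁ v₂ v₃ v₄ w₁ w₂ w₃ w₄

section

variable {A₁ : Type w₁} {B₁ : Type w₂} {A₂ : Type w₃} {B₂ : Type w₄}
  [Category.{v₁} A₁] [Category.{v₂} B₁] [Category.{v₃} A₂] [Category.{v₄} B₂]

/-- The canonical left adjoint `A ⥤ F ↓ B` of `Comma.fst`, sending `a` to `(a, F a, 𝟙)`. -/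
@[simps]
def commaLfun (F : A₁ ⥤ B₁) : A₁ ⥤ Comma F (𝟭 B₁) where
  obj a := { left := a, right := F.obj a, hom := 𝟙 _ }
  map k := { left := k, right := F.map k, w := by simp }

/-- `commaLfun F ⊣ Comma.fst F (𝟭 B)`. -/
def commaAdjL (F : A₁ ⥤ B₁) : commaLfun F ⊣ Comma.fst F (𝟭 B₁) :=
  Adjunction.mkOfUnitCounit
    { unit := { app := fun a => 𝟙 a, naturality := by intros; simp; erw [Category.comp_id, Category.id_comp] }
      counit :=
        { app := fun X => { left := 𝟙 X.left, right := X.hom, w := by simp; erw [F.map_id, Category.id_comp] }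
          naturality := by
            intro X Y f
            ext
            · simp; erw [Category.comp_id, Category.id_comp]
            · have := f.w
              dsimp at this ⊢
              exact this }
      left_triangle := by
        ext X
        · simp; erw [Category.comp_id]; rfl
        · simp; erw [Category.comp_id]; exact F.map_id _
      right_triangle := by ext X; simp; erw [Category.comp_id, Category.comp_id] }

/-- The canonical right adjoint `B ⥤ F ↓ B` of `Comma.snd`, sending `b` to `(U b, b, ε_b)`. -/
@[simps]
def commaUfun {F : A₁ ⥤ B₁} {U : B₁ ⥤ A₁} (adj : F ⊣ U) : B₁ ⥤ Comma F (𝟭 B₁) where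
  obj b := { left := U.obj b, right := b, hom := adj.counit.app b }
  map g := { left := U.map g, right := g, w := by simp }

/-- The canonical adjunction `Comma.snd F (𝟭 B) ⊣ commaUfun adj`, with identity counit. -/
def commaAdjCan {F : A₁ ⥤ B₁} {U : B₁ ⥤ A₁} (adj : F ⊣ U) :
    Comma.snd F (𝟭 B₁) ⊣ commaUfun adj :=
  Adjunction.mkOfUnitCounit
    { unit :=
        { app := fun X =>
            { left := (adj.homEquiv _ _) X.hom
              right := 𝟙 X.right
              w := by
                simp [Adjunction.homEquiv_unit]
                erw [(𝟭 B₁).map_id, Category.comp_id, F.map_comp, Category.assoc,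
                  adj.counit_naturality, ← Category.assoc, adj.left_triangle_components,
                  Category.id_comp] }
          naturality := by
            intro X Y f
            ext
            · have hw := f.w
              have hnat := adj.unit.naturality f.left
              dsimp at hw hnat ⊢
              simp only [Adjunction.homEquiv_unit]
              erw [← Category.assoc, hnat, Category.assoc, ← U.map_comp, hw,
                U.map_comp, Category.assoc]
              rfl
            · simp; erw [Category.comp_id, Category.id_comp] }
      counit := { app := fun b => 𝟙 b, naturality := by intros; simp; erw [Category.comp_id, Category.id_comp] }
      left_triangle := by ext X; simp; erw [Category.comp_id, Category.comp_id]; rfl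
      right_triangle := by
        ext b
        · dsimp
          simp [Adjunction.homEquiv_unit]
          erw [commaUfun_map_left, U.map_id, Category.comp_id, Adjunction.homEquiv_unit]
          exact adj.right_triangle_components b
        · simp
          erw [Category.id_comp]; rfl }

/-- The counit of any adjunction `Comma.snd F (𝟭 B) ⊣ u` is a natural isomorphism. -/
theorem commaSnd_counit_isIso {F : A₁ ⥤ B₁} {U : B₁ ⥤ A₁} (adj : F ⊣ U)
    {u : B₁ ⥤ Comma F (𝟭 B₁)} (adj' : Comma.snd F (𝟭 B₁) ⊣ u) : IsIso adj'.counit := by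
  haveI : ∀ b, IsIso ((commaAdjCan adj).counit.app b) := by
    intro b
    have : (commaAdjCan adj).counit.app b = 𝟙 b := rfl
    rw [this]
    exact IsIso.id b
  haveI : IsIso (commaAdjCan adj).counit := NatIso.isIso_of_isIso_app _
  rw [← Adjunction.rightAdjointUniq_hom_counit adj' (commaAdjCan adj)]
  infer_instance

/-- The 2-cell filling the top square, between the canonical left adjoints of `Comma.fst`. -/
@[simps]
def tauCell {F₁ : A₁ ⥤ B₁} {F₂ : A₂ ⥤ B₂} (γ : A₁ ⥤ A₂) (β : B₁ ⥤ B₂)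
    (σ : γ ⋙ F₂ ≅ F₁ ⋙ β) : γ ⋙ commaLfun F₂ ⟶ commaLfun F₁ ⋙ betaBar γ β σ where
  app a := { left := 𝟙 _, right := σ.hom.app a, w := by simp; erw [F₂.map_id, β.map_id, Category.comp_id, Category.id_comp] }
  naturality := by
    intro a a' k
    ext
    · simp; erw [Category.comp_id, Category.id_comp]; rfl
    · have := σ.hom.naturality k
      dsimp at this ⊢
      exact this

/-- The composite `commaLfun F ⋙ Comma.snd F (𝟭 B)` is isomorphic to `F`. -/
def commaEIso (F : A₁ ⥤ B₁) : commaLfun F ⋙ Comma.snd F (𝟭 B₁) ≅ F :=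
  NatIso.ofComponents (fun _ => Iso.refl _) (by intros; simp; erw [Category.comp_id, Category.id_comp])

/-- A morphism in a comma category with invertible components is invertible. -/
theorem comma_isIso_of_components {T : Type*} [Category T] {L : A₁ ⥤ T} {R : B₁ ⥤ T}
    {X Y : Comma L R} (f : X ⟶ Y) [IsIso f.left] [IsIso f.right] : IsIso f := by
  refine ⟨(Comma.isoMk (asIso f.left) (asIso f.right) f.w).inv, ?_, ?_⟩
  · ext <;> simp [Comma.isoMk]
  · ext <;> simp [Comma.isoMk]

end

section

variable {A₁ B₁ A₂ B₂ : Type*} [Category A₁] [Category B₁] [Category A₂] [Category B₂]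

theorem mate_iso_iff_comma_mate_iso
    {F₁ : A₁ ⥤ B₁} {U₁ : B₁ ⥤ A₁} {F₂ : A₂ ⥤ B₂} {U₂ : B₂ ⥤ A₂}
    (adj₁ : F₁ ⊣ U₁) (adj₂ : F₂ ⊣ U₂)
    (γ : A₁ ⥤ A₂) (β : B₁ ⥤ B₂) (σ : γ ⋙ F₂ ≅ F₁ ⋙ β)
    (u₁ : B₁ ⥤ Comma F₁ (𝟭 B₁)) (u₂ : B₂ ⥤ Comma F₂ (𝟭 B₂))
    (adj₁' : Comma.snd F₁ (𝟭 B₁) ⊣ u₁) (adj₂' : Comma.snd F₂ (𝟭 B₂) ⊣ u₂) :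
    betaBar γ β σ ⋙ Comma.snd F₂ (𝟭 B₂) = Comma.snd F₁ (𝟭 B₁) ⋙ β ∧
    (IsIso (mateEquiv adj₁ adj₂ σ.hom) ↔
      IsIso (mateEquiv adj₁' adj₂' (eqToHom (betaBar_comm γ β σ)))) := by
  refine ⟨betaBar_comm γ β σ, ?_⟩
  haveI h₁c : IsIso adj₁'.counit := commaSnd_counit_isIso adj₁ adj₁'
  haveI h₂c : IsIso adj₂'.counit := commaSnd_counit_isIso adj₂ adj₂'
  -- the mate of the top square is an isomorphism
  haveI hmτapp : ∀ X : Comma F₁ (𝟭 B₁),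
      IsIso ((mateEquiv (commaAdjL F₁) (commaAdjL F₂) (tauCell γ β σ)).app X) := by
    intro X
    have h : (mateEquiv (commaAdjL F₁) (commaAdjL F₂) (tauCell γ β σ)).app X
        = 𝟙 (γ.obj X.left) := by
      simp [mateEquiv, commaAdjL, tauCell, Adjunction.mkOfUnitCounit]
      erw [Category.id_comp, Category.id_comp, γ.map_id, Category.comp_id]
      rfl
    rw [h]; exact IsIso.id _
  haveI hmτ : IsIso (mateEquiv (commaAdjL F₁) (commaAdjL F₂) (tauCell γ β σ)) :=
    NatIso.isIso_of_isIso_app _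
  haveI : IsIso (Functor.whiskerLeft u₁ (mateEquiv (commaAdjL F₁) (commaAdjL F₂) (tauCell γ β σ))) := by
    haveI : ∀ b, IsIso ((Functor.whiskerLeft u₁
        (mateEquiv (commaAdjL F₁) (commaAdjL F₂) (tauCell γ β σ))).app b) := fun b =>
      hmτapp (u₁.obj b)
    exact NatIso.isIso_of_isIso_app _
  -- the `snd`-components of the bottom mate are always isomorphisms
  have hsnd : ∀ b : B₁, IsIso ((Comma.snd F₂ (𝟭 B₂)).map
      ((mateEquiv adj₁' adj₂' (eqToHom (betaBar_comm γ β σ))).app b)) := by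
    intro b
    have hc := mateEquiv_counit adj₁' adj₂' (eqToHom (betaBar_comm γ β σ)) b
    haveI : IsIso ((eqToHom (betaBar_comm γ β σ)).app (u₁.obj b)) := by
      rw [eqToHom_app]; infer_instance
    have h : (Comma.snd F₂ (𝟭 B₂)).map
        ((mateEquiv adj₁' adj₂' (eqToHom (betaBar_comm γ β σ))).app b)
        = ((eqToHom (betaBar_comm γ β σ)).app (u₁.obj b) ≫ β.map (adj₁'.counit.app b))
          ≫ inv (adj₂'.counit.app (β.obj b)) := by
      rw [← hc]; simp
    rw [h]; infer_instance
  -- the key 2-cell equation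
  have keyEq : TwoSquare.vComp (tauCell γ β σ) (eqToHom (betaBar_comm γ β σ))
        ≫ Functor.whiskerRight (commaEIso F₁).hom β
      = Functor.whiskerLeft γ (commaEIso F₂).hom ≫ σ.hom := by
    ext a
    simp [TwoSquare.vComp, commaEIso, eqToHom_app]
    change σ.hom.app a ≫ eqToHom _ ≫ β.map (𝟙 _) = 𝟙 _ ≫ σ.hom.app a
    erw [β.map_id, eqToHom_refl, Category.id_comp, Category.comp_id, Category.id_comp]
  -- conjugate isomorphisms relating the abstract adjunctions to the comma ones
  haveI hc₂ : IsIso (conjugateEquiv adj₂ ((commaAdjL F₂).comp adj₂') (commaEIso F₂).hom) := by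
    rw [← conjugateIsoEquiv_apply_hom]
    infer_instance
  haveI hc₁ : IsIso (conjugateEquiv adj₁ ((commaAdjL F₁).comp adj₁') (commaEIso F₁).hom) := by
    rw [← conjugateIsoEquiv_apply_hom]
    infer_instance
  haveI : IsIso (Functor.whiskerLeft β (conjugateEquiv adj₂ ((commaAdjL F₂).comp adj₂')
      (commaEIso F₂).hom)) := by
    haveI : ∀ b, IsIso ((Functor.whiskerLeft β (conjugateEquiv adj₂ ((commaAdjL F₂).comp adj₂')
        (commaEIso F₂).hom)).app b) := fun b => by
      dsimp; infer_instance
    exact NatIso.isIso_of_isIso_app _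
  haveI : IsIso (Functor.whiskerRight (conjugateEquiv adj₁ ((commaAdjL F₁).comp adj₁')
      (commaEIso F₁).hom) γ) := by
    haveI : ∀ a, IsIso ((Functor.whiskerRight (conjugateEquiv adj₁ ((commaAdjL F₁).comp adj₁')
        (commaEIso F₁).hom) γ).app a) := fun a => by
      dsimp; infer_instance
    exact NatIso.isIso_of_isIso_app _
  -- the pasting equation
  have e₁ := mateEquiv_conjugateEquiv_vcomp adj₁ adj₂ ((commaAdjL F₂).comp adj₂')
    σ.hom (commaEIso F₂).hom
  have e₂ := conjugateEquiv_mateEquiv_vcomp adj₁ ((commaAdjL F₁).comp adj₁')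
    ((commaAdjL F₂).comp adj₂') (commaEIso F₁).hom
    (TwoSquare.vComp (tauCell γ β σ) (eqToHom (betaBar_comm γ β σ)))
  simp only [TwoSquare.whiskerRight, TwoSquare.whiskerBottom, TwoSquare.whiskerLeft,
    TwoSquare.whiskerTop] at e₁ e₂
  rw [← keyEq] at e₁
  have big : mateEquiv adj₁ adj₂ σ.hom ≫ Functor.whiskerLeft β (conjugateEquiv adj₂
        ((commaAdjL F₂).comp adj₂') (commaEIso F₂).hom)
      = Functor.whiskerRight (conjugateEquiv adj₁ ((commaAdjL F₁).comp adj₁') (commaEIso F₁).hom) γ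
        ≫ mateEquiv ((commaAdjL F₁).comp adj₁') ((commaAdjL F₂).comp adj₂')
          (TwoSquare.vComp (tauCell γ β σ) (eqToHom (betaBar_comm γ β σ))) :=
    e₁.symm.trans e₂
  have hM : mateEquiv ((commaAdjL F₁).comp adj₁') ((commaAdjL F₂).comp adj₂')
        (TwoSquare.vComp (tauCell γ β σ) (eqToHom (betaBar_comm γ β σ)))
      = Functor.whiskerLeft u₁ (mateEquiv (commaAdjL F₁) (commaAdjL F₂) (tauCell γ β σ))
        ≫ Functor.whiskerRight (mateEquiv adj₁' adj₂' (eqToHom (betaBar_comm γ β σ)))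
          (Comma.fst F₂ (𝟭 B₂)) := by
    erw [mateEquiv_hcomp]
    ext b
    simp [TwoSquare.hComp]
    rfl
  constructor
  · intro h
    haveI : IsIso (Functor.whiskerRight (conjugateEquiv adj₁ ((commaAdjL F₁).comp adj₁')
          (commaEIso F₁).hom) γ
        ≫ mateEquiv ((commaAdjL F₁).comp adj₁') ((commaAdjL F₂).comp adj₂')
          (TwoSquare.vComp (tauCell γ β σ) (eqToHom (betaBar_comm γ β σ)))) := by
      rw [← big]; exact IsIso.comp_isIso' h inferInstance
    haveI hMiso : IsIso (mateEquiv ((commaAdjL F₁).comp adj₁') ((commaAdjL F₂).comp adj₂')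
        (TwoSquare.vComp (tauCell γ β σ) (eqToHom (betaBar_comm γ β σ)))) :=
      IsIso.of_isIso_comp_left (Functor.whiskerRight (conjugateEquiv adj₁ ((commaAdjL F₁).comp adj₁')
        (commaEIso F₁).hom) γ) _
    haveI hwr : IsIso (Functor.whiskerRight (mateEquiv adj₁' adj₂' (eqToHom (betaBar_comm γ β σ)))
        (Comma.fst F₂ (𝟭 B₂))) := by
      rw [hM] at hMiso
      exact IsIso.of_isIso_comp_left
        (Functor.whiskerLeft u₁ (mateEquiv (commaAdjL F₁) (commaAdjL F₂) (tauCell γ β σ))) _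
    haveI : ∀ b, IsIso ((mateEquiv adj₁' adj₂' (eqToHom (betaBar_comm γ β σ))).app b) := by
      intro b
      haveI : IsIso (((mateEquiv adj₁' adj₂' (eqToHom (betaBar_comm γ β σ))).app b).right) :=
        hsnd b
      haveI : IsIso (((mateEquiv adj₁' adj₂' (eqToHom (betaBar_comm γ β σ))).app b).left) := by
        have h' : ((mateEquiv adj₁' adj₂' (eqToHom (betaBar_comm γ β σ))).app b).left
            = (Functor.whiskerRight (mateEquiv adj₁' adj₂' (eqToHom (betaBar_comm γ β σ)))
              (Comma.fst F₂ (𝟭 B₂))).app b := rfl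
        rw [h']; infer_instance
      exact comma_isIso_of_components _
    exact NatIso.isIso_of_isIso_app _
  · intro h
    haveI : IsIso (Functor.whiskerRight (mateEquiv adj₁' adj₂' (eqToHom (betaBar_comm γ β σ)))
        (Comma.fst F₂ (𝟭 B₂))) := by
      haveI : ∀ b, IsIso ((Functor.whiskerRight (mateEquiv adj₁' adj₂' (eqToHom (betaBar_comm γ β σ)))
          (Comma.fst F₂ (𝟭 B₂))).app b) := fun b => by
        have h' : (Functor.whiskerRight (mateEquiv adj₁' adj₂' (eqToHom (betaBar_comm γ β σ)))
            (Comma.fst F₂ (𝟭 B₂))).app b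
          = (Comma.fst F₂ (𝟭 B₂)).map ((mateEquiv adj₁' adj₂' (eqToHom (betaBar_comm γ β σ))).app b) := rfl
        haveI := NatIso.isIso_app_of_isIso (F := u₁ ⋙ betaBar γ β σ) (G := β ⋙ u₂)
          (mateEquiv adj₁' adj₂' (eqToHom (betaBar_comm γ β σ))) b
        rw [h']
        infer_instance
      exact NatIso.isIso_of_isIso_app _
    haveI : IsIso (mateEquiv ((commaAdjL F₁).comp adj₁') ((commaAdjL F₂).comp adj₂')
        (TwoSquare.vComp (tauCell γ β σ) (eqToHom (betaBar_comm γ β σ)))) := by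
      rw [hM]; infer_instance
    haveI : IsIso (mateEquiv adj₁ adj₂ σ.hom ≫ Functor.whiskerLeft β (conjugateEquiv adj₂
        ((commaAdjL F₂).comp adj₂') (commaEIso F₂).hom)) := by
      rw [big]; exact IsIso.comp_isIso' inferInstance inferInstance
    exact IsIso.of_isIso_comp_right _ (Functor.whiskerLeft β (conjugateEquiv adj₂
      ((commaAdjL F₂).comp adj₂') (commaEIso F₂).hom))

end
end

section
/- Isofibrations of categories are stable under pullback: if F : A ⥤ C and G : B ⥤ C are functors between categories and G is an isofibration, then the first projection pullback.fst : Limits.pullback F G ⥤ A of the pullback of F and G in the category Cat is an isofibration. -/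
/-!
STATEMENT 4: Isofibrations of categories are stable under pullback in `Cat`:
if `G : B ⥤ C` is an isofibration, then the first projection of the pullback of
`F : A ⥤ C` and `G` in `Cat` is an isofibration.
-/

open CategoryTheory Limits

universe u

/-- A functor `G : B ⥤ C` is an isofibration if every isomorphism
`φ : G.obj b ≅ c` lifts to an isomorphism `ψ : b ≅ b'` with `G.obj b' = c`
whose image under `G` equals `φ` modulo the identification `G.obj b' = c`. -/
def Isofibration {B : Type*} {C : Type*} [Category B] [Category C] (G : B ⥤ C) : Prop :=
  ∀ ⦃b : B⦄ ⦃c : C⦄ (φ : G.obj b ≅ c),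
    ∃ (b' : B) (e : G.obj b' = c) (ψ : b ≅ b'), G.mapIso ψ ≪≫ eqToIso e = φ


structure WIso : Type u where
  down : Bool

instance : Category.{u} WIso where
  Hom _ _ := PUnit.{u+1}
  id _ := ⟨⟩
  comp _ _ := ⟨⟩

def wiso : (⟨false⟩ : WIso.{u}) ≅ ⟨true⟩ := ⟨⟨⟩, ⟨⟩, rfl, rfl⟩

def isoFunctor {A : Type*} [Category A] {a a' : A} (φ : a ≅ a') : WIso.{u} ⥤ A where
  obj x := bif x.down then a' else a
  map {x y} _ :=
    match x, y with
    | ⟨false⟩, ⟨false⟩ => 𝟙 a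
    | ⟨false⟩, ⟨true⟩ => φ.hom
    | ⟨true⟩, ⟨false⟩ => φ.inv
    | ⟨true⟩, ⟨true⟩ => 𝟙 a'
  map_id := by rintro ⟨(_|_)⟩ <;> rfl
  map_comp := by rintro ⟨(_|_)⟩ ⟨(_|_)⟩ ⟨(_|_)⟩ _ _ <;> simp

@[simp] lemma isoFunctor_obj_false {A : Type*} [Category A] {a a' : A} (φ : a ≅ a') :
    (isoFunctor.{u} φ).obj ⟨false⟩ = a := rfl
@[simp] lemma isoFunctor_obj_true {A : Type*} [Category A] {a a' : A} (φ : a ≅ a') :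
    (isoFunctor.{u} φ).obj ⟨true⟩ = a' := rfl
@[simp] lemma isoFunctor_map_hom {A : Type*} [Category A] {a a' : A} (φ : a ≅ a') :
    (isoFunctor.{u} φ).map wiso.hom = φ.hom := rfl


def ptF {A : Type*} [Category A] (a : A) : Discrete PUnit.{u+1} ⥤ A :=
  (Functor.const _).obj a

lemma ptF_comp {A : Type*} {B : Type*} [Category A] [Category B] (T : A ⥤ B) (a : A) :
    ptF.{u} a ⋙ T = ptF.{u} (T.obj a) := by
  refine CategoryTheory.Functor.ext (fun _ => rfl) ?_
  intro X Y f
  show T.map (𝟙 a) = _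
  simp [ptF]
  rfl

theorem isofibration_pullback_fst {A B C : Cat.{u, u}} (F : A ⟶ C) (G : B ⟶ C)
    (hG : Isofibration G.toFunctor) :
    Isofibration (pullback.fst F G).toFunctor := by
  set P := (pullback.fst F G).toFunctor with hP
  set Q := (pullback.snd F G).toFunctor with hQ
  intro x a φ
  have hcond : P ⋙ F.toFunctor = Q ⋙ G.toFunctor := congrArg Cat.Hom.toFunctor (pullback.condition (f := F) (g := G))
  have h : F.toFunctor.obj (P.obj x) = G.toFunctor.obj (Q.obj x) := Functor.congr_obj hcond x
  obtain ⟨b', e, ψ, hψ⟩ := hG (eqToIso h.symm ≪≫ F.toFunctor.mapIso φ)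
  have hψh : G.toFunctor.map ψ.hom ≫ eqToHom e = eqToHom h.symm ≫ F.toFunctor.map φ.hom :=
    congrArg Iso.hom hψ
  set HA : Cat.of WIso.{u} ⟶ A := (isoFunctor.{u} φ).toCatHom with hHA
  set HB : Cat.of WIso.{u} ⟶ B := (isoFunctor.{u} ψ).toCatHom with hHB
  have w : HA ≫ F = HB ≫ G := by
    have hobj : ∀ X : WIso.{u}, (HA ≫ F).toFunctor.obj X = (HB ≫ G).toFunctor.obj X := by
      rintro ⟨(_|_)⟩
      · exact h
      · exact e.symm
    refine Cat.Hom.ext (CategoryTheory.Functor.ext hobj ?_)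
    have hGh : G.toFunctor.map ψ.hom = eqToHom h.symm ≫ F.toFunctor.map φ.hom ≫ eqToHom e.symm := by
      have := hψh
      rw [comp_eqToHom_iff] at this
      rw [this]; simp
    have hψi := congrArg Iso.inv hψ
    simp only [Iso.trans_inv, Functor.mapIso_inv, eqToIso.inv] at hψi
    have hGi : G.toFunctor.map ψ.inv = eqToHom e ≫ F.toFunctor.map φ.inv ≫ eqToHom h := by
      rw [eqToHom_comp_iff] at hψi
      rw [hψi]
    rintro ⟨(_|_)⟩ ⟨(_|_)⟩ f
    · show F.toFunctor.map (𝟙 _) = _ ≫ G.toFunctor.map (𝟙 _) ≫ _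
      simp
    · show F.toFunctor.map φ.hom = eqToHom h ≫ G.toFunctor.map ψ.hom ≫ eqToHom e
      rw [hGh]; simp
    · show F.toFunctor.map φ.inv = eqToHom e.symm ≫ G.toFunctor.map ψ.inv ≫ eqToHom h.symm
      rw [hGi]; simp
    · show F.toFunctor.map (𝟙 _) = _ ≫ G.toFunctor.map (𝟙 _) ≫ _
      simp
  set L : Cat.of WIso ⟶ pullback F G := pullback.lift HA HB w with hL
  have hLP : L.toFunctor ⋙ P = HA.toFunctor := congrArg Cat.Hom.toFunctor (pullback.lift_fst _ _ w)
  have hLQ : L.toFunctor ⋙ Q = HB.toFunctor := congrArg Cat.Hom.toFunctor (pullback.lift_snd _ _ w)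
  have hobj1 : P.obj (L.toFunctor.obj ⟨false⟩) = P.obj x := Functor.congr_obj hLP ⟨false⟩
  have hobj2 : Q.obj (L.toFunctor.obj ⟨false⟩) = Q.obj x := Functor.congr_obj hLQ ⟨false⟩
  set O1 : Cat.of (Discrete PUnit.{u+1}) ⟶ pullback F G :=
    (ptF.{u} (L.toFunctor.obj ⟨false⟩)).toCatHom with hO1
  set O2 : Cat.of (Discrete PUnit.{u+1}) ⟶ pullback F G := (ptF.{u} x).toCatHom with hO2
  have key : O1 = O2 := by
    apply pullback.hom_ext
    · apply Cat.Hom.ext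
      show ptF.{u} (L.toFunctor.obj ⟨false⟩) ⋙ P = ptF.{u} x ⋙ P
      rw [ptF_comp, ptF_comp, hobj1]
    · apply Cat.Hom.ext
      show ptF.{u} (L.toFunctor.obj ⟨false⟩) ⋙ Q = ptF.{u} x ⋙ Q
      rw [ptF_comp, ptF_comp, hobj2]
  have hx : L.toFunctor.obj ⟨false⟩ = x :=
    Functor.congr_obj (congrArg Cat.Hom.toFunctor key) ⟨PUnit.unit⟩
  have e' : P.obj (L.toFunctor.obj ⟨true⟩) = a := Functor.congr_obj hLP ⟨true⟩
  refine ⟨L.toFunctor.obj ⟨true⟩, e', eqToIso hx.symm ≪≫ L.toFunctor.mapIso wiso, ?_⟩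
  apply Iso.ext
  have hmap' : P.map (L.toFunctor.map wiso.hom) = eqToHom hobj1 ≫ φ.hom ≫ eqToHom e'.symm :=
    Functor.congr_hom hLP wiso.hom
  simp only [Iso.trans_hom, Functor.mapIso_hom, eqToIso.hom, Functor.map_comp, eqToHom_map,
    Category.assoc, hmap', eqToHom_trans, eqToHom_refl, Category.comp_id, Category.id_comp,
    eqToHom_trans_assoc]
  erw [Functor.mapIso_hom, hmap']
  simp
end

section
/- Consider morphisms of simplicial sets l : A ⟶ X, r : X ⟶ B, l' : A' ⟶ X', r' : X' ⟶ B', f : A ⟶ A', g : B ⟶ B' with g ∘ r ∘ l = r' ∘ l' ∘ f. Suppose l is surjective on 0-simplices, and suppose r' has the property that for every n ≥ 0 and every n-simplex τ of B' all of whose vertices lie in the image of r' on 0-simplices, there exists a unique n-simplex of X' whose image under r' is τ. Then there exists a unique morphism h : X ⟶ X' with h ∘ l = l' ∘ f and r' ∘ h = g ∘ r. -/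
/-!
STATEMENT 6: Surjective-on-vertices simplicial maps are left orthogonal to maps
with the unique-lifting property of inclusions of simplicial subsets spanned by
a set of vertices: given `l : A ⟶ X`, `r : X ⟶ B`, `l' : A' ⟶ X'`, `r' : X' ⟶ B'`,
`f : A ⟶ A'`, `g : B ⟶ B'` with `g ∘ r ∘ l = r' ∘ l' ∘ f`, with `l` surjective on
`0`-simplices and `r'` such that every simplex of `B'` all of whose vertices lie
in the image of `r'` on `0`-simplices has a unique preimage, there is a unique
`h : X ⟶ X'` with `h ∘ l = l' ∘ f` and `r' ∘ h = g ∘ r`.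
-/

open CategoryTheory Opposite

universe u

/-- The `i`-th vertex of a `k`-simplex `σ` of a simplicial set `T`. -/
def SSet.vertexOf (T : SSet.{u}) {k : SimplexCategory} (σ : T.obj (op k))
    (i : Fin (k.len + 1)) : T.obj (op (SimplexCategory.mk 0)) :=
  T.map (SimplexCategory.const (SimplexCategory.mk 0) k i).op σ

theorem exists_unique_diagonal_filler
    {A X B A' X' B' : SSet.{u}}
    (l : A ⟶ X) (r : X ⟶ B) (l' : A' ⟶ X') (r' : X' ⟶ B')
    (f : A ⟶ A') (g : B ⟶ B')
    (hcomm : l ≫ r ≫ g = f ≫ l' ≫ r')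
    (hl : Function.Surjective (l.app (op (SimplexCategory.mk 0))))
    (hr' : ∀ (k : SimplexCategory) (τ : B'.obj (op k)),
        (∀ i : Fin (k.len + 1),
          B'.vertexOf τ i ∈ Set.range (r'.app (op (SimplexCategory.mk 0)))) →
        ∃! x : X'.obj (op k), r'.app (op k) x = τ) :
    ∃! h : X ⟶ X', l ≫ h = f ≫ l' ∧ h ≫ r' = r ≫ g := by
  have key : ∀ (k : SimplexCategory) (x : X.obj (op k)),
      ∃! x' : X'.obj (op k), r'.app (op k) x' = g.app (op k) (r.app (op k) x) := by
    intro k x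
    apply hr'
    intro i
    have h1 : B'.vertexOf (g.app (op k) (r.app (op k) x)) i
        = g.app _ (r.app _ (X.map (SimplexCategory.const (.mk 0) k i).op x)) := by
      simp [SSet.vertexOf, FunctorToTypes.naturality]
    obtain ⟨a, ha⟩ := hl (X.map (SimplexCategory.const (.mk 0) k i).op x)
    refine ⟨l'.app _ (f.app _ a), ?_⟩
    rw [h1, ← ha]
    exact (ConcreteCategory.congr_hom (congr_app hcomm (op (.mk 0))) a).symm
  choose hfun hspec huniq using key
  refine ⟨{ app := fun K => TypeCat.ofHom (fun x => hfun K.unop x), naturality := ?_ }, ⟨?_, ?_⟩, ?_⟩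
  · intro K K' φ
    ext x
    show hfun K'.unop (X.map φ x) = X'.map φ (hfun K.unop x)
    refine (huniq K'.unop (X.map φ x) _ ?_).symm
    show r'.app _ (X'.map φ (hfun K.unop x)) = g.app _ (r.app _ (X.map φ x))
    rw [FunctorToTypes.naturality r' φ, hspec K.unop x,
      ← FunctorToTypes.naturality g φ, ← FunctorToTypes.naturality r φ]
  · ext K a
    show hfun K.unop (l.app K a) = l'.app K (f.app K a)
    refine (huniq K.unop (l.app K a) _ ?_).symm
    exact (ConcreteCategory.congr_hom (congr_app hcomm K) a).symm
  · ext K x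
    exact hspec K.unop x
  · intro h' ⟨hc1, hc2⟩
    ext K x
    exact huniq K.unop x (h'.app K x) (ConcreteCategory.congr_hom (congr_app hc2 K) x)
end

section
/- Let p : E ⟶ X be a morphism of simplicial sets and let u be a p-universal vertex of E. Let n, m ≥ 1 and let ∂(Δ[n] × Δ[m]) denote the simplicial subset (∂Δ[n] × Δ[m]) ∪ (Δ[n] × ∂Δ[m]) of Δ[n] × Δ[m], with inclusion ι. Given morphisms h : ∂(Δ[n] × Δ[m]) ⟶ E and k : Δ[n] × Δ[m] ⟶ X such that p ∘ h = k ∘ ι and h sends the vertex (n, m) (the pair of terminal vertices) to u, there exists a morphism h̄ : Δ[n] × Δ[m] ⟶ E with h̄ ∘ ι = h and p ∘ h̄ = k. -/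
/-!
STATEMENT 8: If `u` is a `p`-universal vertex of `E` (for `p : E ⟶ X`), then any
extension problem along the inclusion `∂(Δ[n] × Δ[m]) ⟶ Δ[n] × Δ[m]` whose
boundary datum sends the vertex `(n, m)` to `u` has a solution.  Here the
simplicial subset `∂(Δ[n] × Δ[m]) = (∂Δ[n] × Δ[m]) ∪ (Δ[n] × ∂Δ[m])` is
presented as the pushout of its two pieces over their intersection
`∂Δ[n] × ∂Δ[m]`, so a morphism `h : ∂(Δ[n] × Δ[m]) ⟶ E` is given by a pair of
morphisms `h₁ : ∂Δ[n] ⊗ Δ[m] ⟶ E` and `h₂ : Δ[n] ⊗ ∂Δ[m] ⟶ E` agreeing on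
`∂Δ[n] ⊗ ∂Δ[m]`.
-/

open CategoryTheory Simplicial MonoidalCategory Opposite Limits

namespace Stmt8

/-- The `i`-th vertex of the standard `n`-simplex, as a morphism `Δ[0] ⟶ Δ[n]`. -/
def vertexMor (n : ℕ) (i : Fin (n + 1)) : (Δ[0] : SSet.{0}) ⟶ Δ[n] :=
  SSet.stdSimplex.map (SimplexCategory.const (SimplexCategory.mk 0) (SimplexCategory.mk n) i)

/-- The `i`-th vertex of the boundary `∂Δ[n]` (for `0 < n`), as a morphism `Δ[0] ⟶ ∂Δ[n]`. -/
def bdryVertexMor (n : ℕ) (hn : 0 < n) (i : Fin (n + 1)) : (Δ[0] : SSet.{0}) ⟶ ∂Δ[n] where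
  app k := TypeCat.ofHom fun x =>
    ⟨(vertexMor n i).app k x, by
      intro hsurj
      obtain ⟨j, hj⟩ : ∃ j : Fin (n + 1), j ≠ i := by
        by_cases h : i = 0
        · exact ⟨⟨1, by omega⟩, by subst h; intro hc; exact absurd (congrArg Fin.val hc) (by simp)⟩
        · exact ⟨0, fun h0 => h h0.symm⟩
      obtain ⟨a, ha⟩ := hsurj j
      have hval : SSet.stdSimplex.asOrderHom ((vertexMor n i).app k x) a = i := rfl
      exact hj (ha.symm.trans hval)⟩
  naturality k k' g := by
    ext x
    apply Subtype.ext
    exact ConcreteCategory.congr_hom ((vertexMor n i).naturality g) x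

/-- A vertex `u : Δ[0] ⟶ E` is `p`-universal (for `p : E ⟶ X`) if every
boundary-filling problem (`n ≥ 1`) whose restriction to the terminal vertex
`⟨n⟩ : Δ[0] ⟶ ∂Δ[n]` is `u` has a solution. -/
def IsUniversalVertex {E X : SSet.{0}} (p : E ⟶ X) (u : (Δ[0] : SSet.{0}) ⟶ E) : Prop :=
  ∀ (n : ℕ) (hn : 0 < n) (t : (∂Δ[n] : SSet.{0}) ⟶ E) (s : (Δ[n] : SSet.{0}) ⟶ X),
    t ≫ p = (∂Δ[n]).ι ≫ s →
    bdryVertexMor n hn (Fin.last n) ≫ t = u →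
    ∃ ℓ : (Δ[n] : SSet.{0}) ⟶ E, (∂Δ[n]).ι ≫ ℓ = t ∧ ℓ ≫ p = s

open SSet SSet.stdSimplex SimplexCategory

namespace Fact

open Finset

variable {k n m : ℕ} (α : Fin (k+1) →o Fin (n+1)) (β : Fin (k+1) →o Fin (m+1))

/-- The "height" function detecting jumps of the pair `(α, β)`. -/
def N : Fin (k+1) → ℕ := fun x => (α x : ℕ) + (β x : ℕ)

lemma N_mono : Monotone (N α β) := fun x y h =>
  Nat.add_le_add (α.mono h) (β.mono h)

/-- The image of `N`. -/
def S : Finset ℕ := Finset.image (N α β) Finset.univ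

lemma N_mem_S (x : Fin (k+1)) : N α β x ∈ S α β := mem_image_of_mem _ (mem_univ x)

/-- Number of distinct "heights"; the canonical factorization goes through `Fin (c α β)`. -/
def c : ℕ := (S α β).card

lemma c_pos : 0 < c α β := Finset.card_pos.mpr ⟨N α β 0, N_mem_S α β 0⟩

noncomputable def theta : Fin (k+1) → Fin (c α β) := fun x =>
  ((S α β).orderIsoOfFin rfl).symm ⟨N α β x, N_mem_S α β x⟩

lemma theta_eq_iff {x y : Fin (k+1)} : theta α β x = theta α β y ↔ N α β x = N α β y := by
  constructor
  · intro h
    have := congrArg (((S α β).orderIsoOfFin rfl)) h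
    simp only [theta, OrderIso.apply_symm_apply] at this
    exact congrArg Subtype.val this
  · intro h
    unfold theta
    congr 1
    exact Subtype.ext h

lemma theta_mono : Monotone (theta α β) := by
  intro x y h
  have : (⟨N α β x, N_mem_S α β x⟩ : {a // a ∈ S α β}) ≤ ⟨N α β y, N_mem_S α β y⟩ :=
    Subtype.mk_le_mk.mpr (N_mono α β h)
  exact ((S α β).orderIsoOfFin rfl).symm.monotone this

lemma theta_surj : Function.Surjective (theta α β) := by
  intro i
  have hmem : (((S α β).orderIsoOfFin rfl) i : ℕ) ∈ S α β := (((S α β).orderIsoOfFin rfl) i).2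
  obtain ⟨x, -, hx⟩ := Finset.mem_image.mp hmem
  refine ⟨x, ?_⟩
  unfold theta
  rw [show (⟨N α β x, N_mem_S α β x⟩ : {a // a ∈ S α β}) = ((S α β).orderIsoOfFin rfl) i from
    Subtype.ext hx]
  exact OrderIso.symm_apply_apply _ _

lemma comp_eq_of_N_eq {x y : Fin (k+1)} (h : N α β x = N α β y) : α x = α y ∧ β x = β y := by
  rcases le_total x y with hxy | hxy
  · have h1 := α.mono hxy
    have h2 := β.mono hxy
    unfold N at h
    constructor <;> [skip; skip] <;>
      · apply Fin.ext
        omega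
  · have h1 := α.mono hxy
    have h2 := β.mono hxy
    unfold N at h
    constructor <;>
      · apply Fin.ext
        omega

noncomputable def sec : Fin (c α β) → Fin (k+1) := fun i =>
  (Finset.univ.filter (fun x => theta α β x = i)).min' (by
    obtain ⟨x, hx⟩ := theta_surj α β i
    exact ⟨x, by simp [hx]⟩)

lemma theta_sec (i : Fin (c α β)) : theta α β (sec α β i) = i := by
  have := Finset.min'_mem (Finset.univ.filter (fun x => theta α β x = i)) (by
    obtain ⟨x, hx⟩ := theta_surj α β i
    exact ⟨x, by simp [hx]⟩)
  simpa [sec] using this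

lemma sec_strictMono : StrictMono (sec α β) := by
  intro i j hij
  by_contra hle
  push_neg at hle
  have := theta_mono α β hle
  rw [theta_sec, theta_sec] at this
  exact absurd (lt_of_lt_of_le hij this) (lt_irrefl _)

lemma comp_sec_theta (x : Fin (k+1)) :
    α (sec α β (theta α β x)) = α x ∧ β (sec α β (theta α β x)) = β x :=
  comp_eq_of_N_eq α β ((theta_eq_iff α β).mp (theta_sec α β (theta α β x)))

noncomputable def acore : Fin (c α β) →o Fin (n+1) :=
  α.comp ⟨sec α β, (sec_strictMono α β).monotone⟩

noncomputable def bcore : Fin (c α β) →o Fin (m+1) :=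
  β.comp ⟨sec α β, (sec_strictMono α β).monotone⟩

lemma acore_theta (x : Fin (k+1)) : acore α β (theta α β x) = α x :=
  (comp_sec_theta α β x).1

lemma bcore_theta (x : Fin (k+1)) : bcore α β (theta α β x) = β x :=
  (comp_sec_theta α β x).2

lemma core_joint_inj {i i' : Fin (c α β)} (ha : acore α β i = acore α β i')
    (hb : bcore α β i = bcore α β i') : i = i' := by
  have : N α β (sec α β i) = N α β (sec α β i') := by
    unfold N
    simp only [acore, bcore] at ha hb
    simp only [OrderHom.comp_coe, OrderHom.coe_mk, Function.comp_apply] at ha hb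
    rw [ha, hb]
  have := (theta_eq_iff α β).mpr this
  rwa [theta_sec, theta_sec] at this

lemma acore_surj (hs : Function.Surjective α) : Function.Surjective (acore α β) := by
  intro v
  obtain ⟨x, hx⟩ := hs v
  exact ⟨theta α β x, by rw [acore_theta]; exact hx⟩

lemma bcore_surj (hs : Function.Surjective β) : Function.Surjective (bcore α β) := by
  intro v
  obtain ⟨x, hx⟩ := hs v
  exact ⟨theta α β x, by rw [bcore_theta]; exact hx⟩

/-- `c` only decreases under precomposition. -/
lemma c_comp_le {k' : ℕ} (g : Fin (k'+1) →o Fin (k+1)) :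
    c (α.comp g) (β.comp g) ≤ c α β := by
  apply Finset.card_le_card
  intro a ha
  obtain ⟨x, -, hx⟩ := Finset.mem_image.mp ha
  exact Finset.mem_image.mpr ⟨g x, mem_univ _, hx⟩

/-- If we precompose with a non-surjective map out of `Fin (k'+1)`, `c ≤ k' + 1`. -/
lemma c_comp_le_of_nonsurj {k' d : ℕ} (α' : Fin (d+2) →o Fin (n+1)) (β' : Fin (d+2) →o Fin (m+1))
    (η : Fin (k'+1) →o Fin (d+2)) (hη : ¬ Function.Surjective η) :
    c (α'.comp η) (β'.comp η) ≤ d + 1 := by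
  simp only [Function.Surjective, not_forall, not_exists] at hη
  obtain ⟨v, hv⟩ := hη
  have hsub : S (α'.comp η) (β'.comp η) ⊆ Finset.image (N α' β') ((Finset.univ.image η).erase v) := by
    intro a ha
    obtain ⟨x, -, hx⟩ := Finset.mem_image.mp ha
    refine Finset.mem_image.mpr ⟨η x, ?_, hx⟩
    exact Finset.mem_erase.mpr ⟨fun hc => hv x hc, Finset.mem_image_of_mem _ (mem_univ x)⟩
  calc c (α'.comp η) (β'.comp η) ≤ ((Finset.univ.image η).erase v).card :=
        le_trans (Finset.card_le_card hsub) (Finset.card_image_le)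
    _ ≤ ((Finset.univ : Finset (Fin (d+2))).erase v).card :=
        Finset.card_le_card (Finset.erase_subset_erase v (Finset.subset_univ _))
    _ = d + 1 := by rw [Finset.card_erase_of_mem (Finset.mem_univ v)]; simp
  
lemma surj_last {a b : ℕ} (f : Fin (a+1) →o Fin (b+1)) (hf : Function.Surjective f) :
    f (Fin.last a) = Fin.last b := by
  obtain ⟨x, hx⟩ := hf (Fin.last b)
  exact le_antisymm (Fin.le_last _) (hx ▸ f.mono (Fin.le_last x))

lemma surj_zero {a b : ℕ} (f : Fin (a+1) →o Fin (b+1)) (hf : Function.Surjective f) :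
    f 0 = 0 := by
  obtain ⟨x, hx⟩ := hf 0
  exact le_antisymm (hx ▸ f.mono (Fin.zero_le x)) (Fin.zero_le _)

lemma two_le_c (hn : 0 < n) (hα : Function.Surjective α) (hβ : Function.Surjective β) :
    2 ≤ c α β := by
  refine Finset.one_lt_card.mpr ⟨N α β 0, N_mem_S α β 0, N α β (Fin.last k), N_mem_S α β _, ?_⟩
  have h0 : α 0 = 0 := surj_zero α hα
  have hl : α (Fin.last k) = Fin.last n := surj_last α hα
  have hb : (β 0 : ℕ) ≤ (β (Fin.last k) : ℕ) := β.mono (Fin.le_last 0)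
  unfold N
  rw [h0, hl]
  simp only [Fin.val_zero, Fin.val_last]
  omega

lemma c_le : c α β ≤ n + m + 1 := by
  have : S α β ⊆ Finset.range (n + m + 1) := by
    intro a ha
    obtain ⟨x, -, hx⟩ := Finset.mem_image.mp ha
    rw [Finset.mem_range, ← hx]
    have h1 := (α x).isLt
    have h2 := (β x).isLt
    unfold N
    omega
  exact le_trans (Finset.card_le_card this) (by simp)

/-- Uniqueness of the (surjective, jointly injective) factorization. -/
lemma unique {c' : ℕ} (θ' : Fin (k+1) →o Fin c') (hsurj : Function.Surjective θ')
    (a' : Fin c' →o Fin (n+1)) (b' : Fin c' →o Fin (m+1))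
    (hinj : ∀ i i', a' i = a' i' → b' i = b' i' → i = i')
    (ha : ∀ x, a' (θ' x) = α x) (hb : ∀ x, b' (θ' x) = β x) :
    c' = c α β ∧ (∀ x, (θ' x : ℕ) = (theta α β x : ℕ)) ∧
      (∀ (i : Fin c') (i' : Fin (c α β)), (i : ℕ) = (i' : ℕ) →
        a' i = acore α β i' ∧ b' i = bcore α β i') := by
  set N' : Fin c' → ℕ := fun i => (a' i : ℕ) + (b' i : ℕ) with hN'
  have hstrict : StrictMono N' := by
    intro i j hij
    have h1 : (a' i : ℕ) ≤ (a' j : ℕ) := a'.mono hij.le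
    have h2 : (b' i : ℕ) ≤ (b' j : ℕ) := b'.mono hij.le
    have hne : a' i ≠ a' j ∨ b' i ≠ b' j := by
      by_contra hcon
      push_neg at hcon
      exact absurd (hinj i j hcon.1 hcon.2) hij.ne
    simp only [hN']
    rcases hne with hne | hne <;>
    · have := Fin.val_ne_of_ne hne
      omega
  have hNcomp : ∀ x, N' (θ' x) = N α β x := by
    intro x
    simp only [hN', N, ha x, hb x]
  have hmem : ∀ i, N' i ∈ S α β := by
    intro i
    obtain ⟨x, hx⟩ := hsurj i
    rw [← hx, hNcomp]
    exact N_mem_S α β x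
  have himage : Finset.image N' Finset.univ = S α β := by
    apply Finset.Subset.antisymm
    · intro a haa
      obtain ⟨i, -, hi⟩ := Finset.mem_image.mp haa
      exact hi ▸ hmem i
    · intro a haa
      obtain ⟨x, -, hx⟩ := Finset.mem_image.mp haa
      exact Finset.mem_image.mpr ⟨θ' x, Finset.mem_univ _, by rw [hNcomp, hx]⟩
  have hc : c' = c α β := by
    have := Finset.card_image_of_injective (Finset.univ : Finset (Fin c')) hstrict.injective
    rw [himage] at this
    simpa [c] using this.symm
  subst hc
  have hN'emb : N' = ⇑((S α β).orderEmbOfFin rfl) :=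
    Finset.orderEmbOfFin_unique rfl hmem hstrict
  have hemb_theta : ∀ x, ((S α β).orderEmbOfFin rfl) (theta α β x) = N α β x := by
    intro x
    have : ((S α β).orderIsoOfFin rfl) (theta α β x) = ⟨N α β x, N_mem_S α β x⟩ := by
      simp [theta]
    exact (Finset.coe_orderIsoOfFin_apply _ _ _).symm.trans (congrArg Subtype.val this)
  have htheta : ∀ x, θ' x = theta α β x := by
    intro x
    apply ((S α β).orderEmbOfFin rfl).injective
    rw [← congrFun hN'emb (θ' x), hNcomp, hemb_theta]
  refine ⟨rfl, fun x => congrArg Fin.val (htheta x), ?_⟩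
  rintro i i' hii
  obtain rfl : i = i' := Fin.ext hii
  have hi : theta α β (sec α β i) = i := theta_sec α β i
  constructor
  · rw [show a' i = a' (θ' (sec α β i)) by rw [htheta, hi], ha]
    rfl
  · rw [show b' i = b' (θ' (sec α β i)) by rw [htheta, hi], hb]
    rfl

end Fact

section Main

variable (n m : ℕ)

/-- elements of `Δ[n] ⊗ Δ[m]` at level `j` -/
abbrev Elt (j : SimplexCategoryᵒᵖ) := (((Δ[n] : SSet.{0}) ⊗ Δ[m])).obj j

variable {n m}

/-- first component as an order hom -/
abbrev aOH {j} (σ : Elt n m j) : Fin (j.unop.len + 1) →o Fin (n+1) := SSet.stdSimplex.asOrderHom σ.1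
abbrev bOH {j} (σ : Elt n m j) : Fin (j.unop.len + 1) →o Fin (m+1) := SSet.stdSimplex.asOrderHom σ.2

lemma elt_ext {N : ℕ} {j} (a b : (Δ[N] : SSet.{0}).obj j)
    (h : SSet.stdSimplex.asOrderHom a = SSet.stdSimplex.asOrderHom b) : a = b := by
  obtain ⟨a⟩ := a
  obtain ⟨b⟩ := b
  exact congrArg ULift.up (SimplexCategory.Hom.ext _ _ h)

lemma pelt_ext {j} (σ σ' : Elt n m j) (h1 : aOH σ = aOH σ') (h2 : bOH σ = bOH σ') : σ = σ' :=
  Prod.ext (elt_ext _ _ h1) (elt_ext _ _ h2)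

lemma aOH_map {j j'} (g : j ⟶ j') (σ : Elt n m j) :
    aOH (((Δ[n] : SSet.{0}) ⊗ Δ[m]).map g σ) = (aOH σ).comp g.unop.toOrderHom := rfl

lemma bOH_map {j j'} (g : j ⟶ j') (σ : Elt n m j) :
    bOH (((Δ[n] : SSet.{0}) ⊗ Δ[m]).map g σ) = (bOH σ).comp g.unop.toOrderHom := rfl

/-- the number of distinct heights of `σ`; "rank + 1" -/
noncomputable def rkc {j} (σ : Elt n m j) : ℕ := Fact.c (aOH σ) (bOH σ)

def Interior {j} (σ : Elt n m j) : Prop :=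
  Function.Surjective ⇑(aOH σ) ∧ Function.Surjective ⇑(bOH σ)

/-- membership in the `d`-th stage subcomplex -/
def InA (d : ℕ) {j} (σ : Elt n m j) : Prop := ¬ Interior σ ∨ rkc σ ≤ d + 1

lemma not_interior_map {j j'} (g : j ⟶ j') (σ : Elt n m j) (h : ¬ Interior σ) :
    ¬ Interior (((Δ[n] : SSet.{0}) ⊗ Δ[m]).map g σ) := by
  intro ⟨ha, hb⟩
  rw [aOH_map] at ha
  rw [bOH_map] at hb
  exact h ⟨(Function.Surjective.of_comp ha), (Function.Surjective.of_comp hb)⟩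

lemma rkc_map_le {j j'} (g : j ⟶ j') (σ : Elt n m j) :
    rkc (((Δ[n] : SSet.{0}) ⊗ Δ[m]).map g σ) ≤ rkc σ :=
  Fact.c_comp_le (aOH σ) (bOH σ) g.unop.toOrderHom

lemma InA_map (d : ℕ) {j j'} (g : j ⟶ j') (σ : Elt n m j) (h : InA d σ) :
    InA d (((Δ[n] : SSet.{0}) ⊗ Δ[m]).map g σ) := by
  rcases h with h | h
  · exact Or.inl (not_interior_map g σ h)
  · exact Or.inr (le_trans (rkc_map_le g σ) h)

lemma interior_two_le_rkc (hn : 0 < n) {j} (σ : Elt n m j) (h : Interior σ) : 2 ≤ rkc σ :=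
  Fact.two_le_c (aOH σ) (bOH σ) hn h.1 h.2

lemma rkc_le {j} (σ : Elt n m j) : rkc σ ≤ n + m + 1 := Fact.c_le _ _

section Res

variable {n m : ℕ}

lemma cast_mono {a b : ℕ} (h : a = b) : Monotone (Fin.cast h) := fun x y hxy => by
  subst h; exact hxy

/-- restriction of a `(d+1)`-level element along an order hom -/
noncomputable def resElt {d : ℕ} (τ : Elt n m (op ⦋d+1⦌)) {j : SimplexCategoryᵒᵖ} (η : Fin (j.unop.len + 1) →o Fin (d+2)) :
    Elt n m j :=
  (((Δ[n] : SSet.{0}) ⊗ Δ[m])).map (Quiver.Hom.op (show j.unop ⟶ ⦋d+1⦌ from SimplexCategory.Hom.mk η)) τ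

lemma aOH_res {d : ℕ} (τ : Elt n m (op ⦋d+1⦌)) {j : SimplexCategoryᵒᵖ} (η : Fin (j.unop.len + 1) →o Fin (d+2)) :
    aOH (resElt τ η) = (aOH τ).comp η := rfl

lemma bOH_res {d : ℕ} (τ : Elt n m (op ⦋d+1⦌)) {j : SimplexCategoryᵒᵖ} (η : Fin (j.unop.len + 1) →o Fin (d+2)) :
    bOH (resElt τ η) = (bOH τ).comp η := rfl

lemma res_res {d : ℕ} (τ : Elt n m (op ⦋d+1⦌)) {j j'} (g : j ⟶ j')
    (η : Fin (j.unop.len + 1) →o Fin (d+2)) :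
    (((Δ[n] : SSet.{0}) ⊗ Δ[m])).map g (resElt τ η) = resElt τ (η.comp g.unop.toOrderHom) := by
  apply pelt_ext
  · exact OrderHom.ext _ _ rfl
  · exact OrderHom.ext _ _ rfl

lemma rkc_res_le {d : ℕ} (τ : Elt n m (op ⦋d+1⦌)) {j : SimplexCategoryᵒᵖ} (η : Fin (j.unop.len + 1) →o Fin (d+2))
    (hη : ¬ Function.Surjective ⇑η) : rkc (resElt τ η) ≤ d + 1 :=
  Fact.c_comp_le_of_nonsurj (aOH τ) (bOH τ) η hη

/-- the canonical degeneracy map of `σ`, recast to land in `Fin (d+2)` -/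
noncomputable def thetaD {j} (σ : Elt n m j) {d : ℕ} (hc : rkc σ = d + 2) :
    Fin (j.unop.len + 1) →o Fin (d+2) where
  toFun x := Fin.cast hc (Fact.theta (aOH σ) (bOH σ) x)
  monotone' x y h := cast_mono hc (Fact.theta_mono (aOH σ) (bOH σ) h)

/-- the nondegenerate core of `σ`, as an element at level `d+1` -/
noncomputable def coreElt {j} (σ : Elt n m j) {d : ℕ} (hc : rkc σ = d + 2) :
    Elt n m (op ⦋d+1⦌) :=
  (SSet.stdSimplex.objMk ((Fact.acore (aOH σ) (bOH σ)).comp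
      ⟨Fin.cast hc.symm, cast_mono hc.symm⟩),
   SSet.stdSimplex.objMk ((Fact.bcore (aOH σ) (bOH σ)).comp
      ⟨Fin.cast hc.symm, cast_mono hc.symm⟩))

lemma aOH_coreElt {j} (σ : Elt n m j) {d : ℕ} (hc : rkc σ = d + 2) (v : Fin (d+2)) :
    aOH (coreElt σ hc) v = Fact.acore (aOH σ) (bOH σ) (Fin.cast hc.symm v) := rfl

lemma bOH_coreElt {j} (σ : Elt n m j) {d : ℕ} (hc : rkc σ = d + 2) (v : Fin (d+2)) :
    bOH (coreElt σ hc) v = Fact.bcore (aOH σ) (bOH σ) (Fin.cast hc.symm v) := rfl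

lemma aOH_coreElt_thetaD {j} (σ : Elt n m j) {d : ℕ} (hc : rkc σ = d + 2) (x) :
    aOH (coreElt σ hc) (thetaD σ hc x) = aOH σ x := by
  rw [aOH_coreElt]
  show Fact.acore _ _ (Fin.cast hc.symm (Fin.cast hc _)) = _
  change Fact.acore _ _ (Fact.theta (aOH σ) (bOH σ) x) = _
  exact Fact.acore_theta _ _ x

lemma bOH_coreElt_thetaD {j} (σ : Elt n m j) {d : ℕ} (hc : rkc σ = d + 2) (x) :
    bOH (coreElt σ hc) (thetaD σ hc x) = bOH σ x := by
  rw [bOH_coreElt]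
  show Fact.bcore _ _ (Fin.cast hc.symm (Fin.cast hc _)) = _
  change Fact.bcore _ _ (Fact.theta (aOH σ) (bOH σ) x) = _
  exact Fact.bcore_theta _ _ x

lemma recomposition {j} (σ : Elt n m j) {d : ℕ} (hc : rkc σ = d + 2) :
    resElt (coreElt σ hc) (thetaD σ hc) = σ := by
  apply pelt_ext
  · rw [aOH_res]
    exact OrderHom.ext _ _ (funext fun x => aOH_coreElt_thetaD σ hc x)
  · rw [bOH_res]
    exact OrderHom.ext _ _ (funext fun x => bOH_coreElt_thetaD σ hc x)

lemma core_interior {j} (σ : Elt n m j) {d : ℕ} (hc : rkc σ = d + 2) (h : Interior σ) :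
    Interior (coreElt σ hc) := by
  constructor
  · intro v
    obtain ⟨i, hi⟩ := Fact.acore_surj (aOH σ) (bOH σ) h.1 v
    refine ⟨Fin.cast hc i, ?_⟩
    rw [aOH_coreElt]
    have hcast : Fin.cast hc.symm (Fin.cast hc i) = i := Fin.ext rfl
    change Fact.acore (aOH σ) (bOH σ) i = v
    exact hi
  · intro v
    obtain ⟨i, hi⟩ := Fact.bcore_surj (aOH σ) (bOH σ) h.2 v
    refine ⟨Fin.cast hc i, ?_⟩
    rw [bOH_coreElt]
    have hcast : Fin.cast hc.symm (Fin.cast hc i) = i := Fin.ext rfl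
    change Fact.bcore (aOH σ) (bOH σ) i = v
    exact hi

lemma core_joint_inj {j} (σ : Elt n m j) {d : ℕ} (hc : rkc σ = d + 2) :
    ∀ i i', aOH (coreElt σ hc) i = aOH (coreElt σ hc) i' →
      bOH (coreElt σ hc) i = bOH (coreElt σ hc) i' → i = i' := by
  intro i i' ha hb
  rw [aOH_coreElt, aOH_coreElt] at ha
  rw [bOH_coreElt, bOH_coreElt] at hb
  have h3 := Fact.core_joint_inj (aOH σ) (bOH σ) ha hb
  have h4 := congrArg Fin.val h3
  exact Fin.ext h4

end Res

section Build

variable {E X : SSet.{0}} {n m : ℕ} (p : E ⟶ X) (u : (Δ[0] : SSet.{0}) ⟶ E)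
  (h₁ : ((∂Δ[n] : SSet.{0}) ⊗ Δ[m]) ⟶ E)
  (h₂ : ((Δ[n] : SSet.{0}) ⊗ ∂Δ[m]) ⟶ E)
  (q : ((Δ[n] : SSet.{0}) ⊗ Δ[m]) ⟶ X)

/-- A family of candidate values for a morphism `Δ[n] ⊗ Δ[m] ⟶ E`. -/
def Fam (E : SSet.{0}) (n m : ℕ) : Type := ∀ (j : SimplexCategoryᵒᵖ), Elt n m j → E.obj j

/-- an arbitrary element of `E.obj j` -/
noncomputable def junk (j : SimplexCategoryᵒᵖ) : E.obj j :=
  u.app j (SSet.stdSimplex.const 0 0 j)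

open Classical in
/-- the base family : the glued boundary datum, and junk on interior simplices -/
noncomputable def F0 : Fam E n m := fun j σ =>
  if hα : Function.Surjective ⇑(aOH σ) then
    (if hβ : Function.Surjective ⇑(bOH σ) then junk u j
     else h₂.app j (σ.1, ⟨σ.2, hβ⟩))
  else h₁.app j (⟨σ.1, hα⟩, σ.2)

lemma F0_bd1 {j} (σ : Elt n m j) (hα : ¬ Function.Surjective ⇑(aOH σ)) :
    F0 u h₁ h₂ j σ = h₁.app j (⟨σ.1, hα⟩, σ.2) := dif_neg hα

lemma F0_bd2 (hglue : ((∂Δ[n] : SSet.{0}) ◁ (∂Δ[m]).ι) ≫ h₁ =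
      ((∂Δ[n]).ι ▷ (∂Δ[m] : SSet.{0})) ≫ h₂)
    {j} (σ : Elt n m j) (hβ : ¬ Function.Surjective ⇑(bOH σ)) :
    F0 u h₁ h₂ j σ = h₂.app j (σ.1, ⟨σ.2, hβ⟩) := by
  by_cases hα : Function.Surjective ⇑(aOH σ)
  · rw [F0, dif_pos hα, dif_neg hβ]
  · rw [F0_bd1 u h₁ h₂ σ hα]
    exact ConcreteCategory.congr_hom (NatTrans.congr_app hglue j) ((⟨σ.1, hα⟩, ⟨σ.2, hβ⟩) :
      ((∂Δ[n] : SSet.{0}) ⊗ ∂Δ[m]).obj j)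

/-- The inductive invariant: `F` behaves like a solution on the `d`-th stage. -/
structure Inv (F : Fam E n m) (d : ℕ) : Prop where
  nat : ∀ {j j' : SimplexCategoryᵒᵖ} (g : j ⟶ j') (σ : Elt n m j), InA d σ →
    F j' (((Δ[n] : SSet.{0}) ⊗ Δ[m]).map g σ) = E.map g (F j σ)
  proj : ∀ (j : SimplexCategoryᵒᵖ) (σ : Elt n m j), InA d σ → p.app j (F j σ) = q.app j σ
  bd1 : ∀ (j : SimplexCategoryᵒᵖ) (σ : Elt n m j) (hα : ¬ Function.Surjective ⇑(aOH σ)),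
    F j σ = h₁.app j (⟨σ.1, hα⟩, σ.2)
  bd2 : ∀ (j : SimplexCategoryᵒᵖ) (σ : Elt n m j) (hβ : ¬ Function.Surjective ⇑(bOH σ)),
    F j σ = h₂.app j (σ.1, ⟨σ.2, hβ⟩)

lemma notInterior0 (hn : 0 < n) {j} (σ : Elt n m j) (hσ : InA 0 σ) : ¬ Interior σ := by
  intro hi
  rcases hσ with h | h
  · exact h hi
  · have := interior_two_le_rkc hn σ hi
    omega

lemma nonsurj_comp {j j' : SimplexCategoryᵒᵖ} (g : j ⟶ j') {N : ℕ}
    (f : Fin (j.unop.len + 1) →o Fin (N+1)) (hf : ¬ Function.Surjective ⇑f) :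
    ¬ Function.Surjective ⇑(f.comp g.unop.toOrderHom) :=
  fun hs => hf (Function.Surjective.of_comp hs)

lemma inv0 (hn : 0 < n)
    (hglue : ((∂Δ[n] : SSet.{0}) ◁ (∂Δ[m]).ι) ≫ h₁ =
      ((∂Δ[n]).ι ▷ (∂Δ[m] : SSet.{0})) ≫ h₂)
    (hk₁ : h₁ ≫ p = ((∂Δ[n]).ι ▷ (Δ[m] : SSet.{0})) ≫ q)
    (hk₂ : h₂ ≫ p = ((Δ[n] : SSet.{0}) ◁ (∂Δ[m]).ι) ≫ q) :
    Inv p h₁ h₂ q (F0 u h₁ h₂) 0 where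
  nat := by
    intro j j' g σ hσ
    have hni := notInterior0 hn σ hσ
    by_cases hα : Function.Surjective ⇑(aOH σ)
    · have hβ : ¬ Function.Surjective ⇑(bOH σ) := fun hb => hni ⟨hα, hb⟩
      have hβ' : ¬ Function.Surjective ⇑(bOH (((Δ[n] : SSet.{0}) ⊗ Δ[m]).map g σ)) :=
        nonsurj_comp g (bOH σ) hβ
      rw [F0_bd2 u h₁ h₂ hglue σ hβ, F0_bd2 u h₁ h₂ hglue _ hβ']
      exact ConcreteCategory.congr_hom (h₂.naturality g) ((σ.1, ⟨σ.2, hβ⟩) : ((Δ[n] : SSet.{0}) ⊗ ∂Δ[m]).obj j)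
    · have hα' : ¬ Function.Surjective ⇑(aOH (((Δ[n] : SSet.{0}) ⊗ Δ[m]).map g σ)) :=
        nonsurj_comp g (aOH σ) hα
      rw [F0_bd1 u h₁ h₂ σ hα, F0_bd1 u h₁ h₂ _ hα']
      exact ConcreteCategory.congr_hom (h₁.naturality g) ((⟨σ.1, hα⟩, σ.2) : ((∂Δ[n] : SSet.{0}) ⊗ Δ[m]).obj j)
  proj := by
    intro j σ hσ
    have hni := notInterior0 hn σ hσ
    by_cases hα : Function.Surjective ⇑(aOH σ)
    · have hβ : ¬ Function.Surjective ⇑(bOH σ) := fun hb => hni ⟨hα, hb⟩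
      rw [F0_bd2 u h₁ h₂ hglue σ hβ]
      exact ConcreteCategory.congr_hom (NatTrans.congr_app hk₂ j) ((σ.1, ⟨σ.2, hβ⟩) :
        ((Δ[n] : SSet.{0}) ⊗ ∂Δ[m]).obj j)
    · rw [F0_bd1 u h₁ h₂ σ hα]
      exact ConcreteCategory.congr_hom (NatTrans.congr_app hk₁ j) ((⟨σ.1, hα⟩, σ.2) :
        ((∂Δ[n] : SSet.{0}) ⊗ Δ[m]).obj j)
  bd1 := fun j σ hα => F0_bd1 u h₁ h₂ σ hα
  bd2 := fun j σ hβ => F0_bd2 u h₁ h₂ hglue σ hβ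

lemma asOrderHom_vertexMor (N : ℕ) (i : Fin (N+1)) (j : SimplexCategoryᵒᵖ)
    (x : (Δ[0] : SSet.{0}).obj j) :
    SSet.stdSimplex.asOrderHom ((vertexMor N i).app j x) = OrderHom.const _ i :=
  OrderHom.ext _ _ (funext fun _ => rfl)

lemma exists_lift (hu : IsUniversalVertex p u) (hm : 0 < m)
    (hvert : CartesianMonoidalCategory.lift (vertexMor n (Fin.last n))
        (bdryVertexMor m hm (Fin.last m)) ≫ h₂ = u)
    (F : Fam E n m) (d : ℕ) (hF : Inv p h₁ h₂ q F d)
    (τ : Elt n m (op ⦋d+1⦌)) (hτ : Interior τ) :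
    ∃ ℓ : (Δ[d+1] : SSet.{0}) ⟶ E,
      (∀ (j : SimplexCategoryᵒᵖ) (η : Fin (j.unop.len + 1) →o Fin (d+2))
         (hη : ¬ Function.Surjective ⇑η),
         ℓ.app j (SSet.stdSimplex.objMk η) = F j (resElt τ η)) ∧
      (∀ (j : SimplexCategoryᵒᵖ) (x : (Δ[d+1] : SSet.{0}).obj j),
         p.app j (ℓ.app j x) = q.app j (resElt τ (SSet.stdSimplex.asOrderHom x))) := by
  have hInA : ∀ (j : SimplexCategoryᵒᵖ) (a : (∂Δ[d+1] : SSet.{0}).obj j),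
      InA d (resElt τ (SSet.stdSimplex.asOrderHom a.1)) :=
    fun j a => Or.inr (rkc_res_le τ _ a.2)
  let t : (∂Δ[d+1] : SSet.{0}) ⟶ E :=
    { app := fun j => TypeCat.ofHom fun a => F j (resElt τ (SSet.stdSimplex.asOrderHom a.1))
      naturality := by
        intro j j' g
        ext a
        show F j' (resElt τ ((SSet.stdSimplex.asOrderHom a.1).comp g.unop.toOrderHom)) = _
        rw [← res_res]
        exact hF.nat g _ (hInA j a) }
  let s : (Δ[d+1] : SSet.{0}) ⟶ X :=
    { app := fun j => TypeCat.ofHom fun x => q.app j (resElt τ (SSet.stdSimplex.asOrderHom x))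
      naturality := by
        intro j j' g
        ext x
        show q.app j' (resElt τ ((SSet.stdSimplex.asOrderHom x).comp g.unop.toOrderHom)) = _
        rw [← res_res]
        exact ConcreteCategory.congr_hom (q.naturality g) (resElt τ (SSet.stdSimplex.asOrderHom x)) }
  have hsquare : t ≫ p = (∂Δ[d+1]).ι ≫ s := by
    ext j a
    exact hF.proj j _ (hInA j a)
  have hvtx : bdryVertexMor (d+1) (Nat.succ_pos d) (Fin.last (d+1)) ≫ t = u := by
    ext j x
    show F j (resElt τ (SSet.stdSimplex.asOrderHom ((vertexMor (d+1) (Fin.last (d+1))).app j x))) =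
      u.app j x
    rw [show (SSet.stdSimplex.asOrderHom ((vertexMor (d+1) (Fin.last (d+1))).app j x)) =
      OrderHom.const _ (Fin.last (d+1)) from asOrderHom_vertexMor _ _ _ _]
    have hres : resElt τ (OrderHom.const _ (Fin.last (d+1))) =
        ((SSet.stdSimplex.objMk (OrderHom.const _ (Fin.last n)) : (Δ[n] : SSet.{0}).obj j),
         (SSet.stdSimplex.objMk (OrderHom.const _ (Fin.last m)) : (Δ[m] : SSet.{0}).obj j)) := by
      apply pelt_ext
      · rw [aOH_res]
        exact OrderHom.ext _ _ (funext fun y => Fact.surj_last (aOH τ) hτ.1)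
      · rw [bOH_res]
        exact OrderHom.ext _ _ (funext fun y => Fact.surj_last (bOH τ) hτ.2)
    rw [hres]
    have hβc : ¬ Function.Surjective ⇑(SSet.stdSimplex.asOrderHom
        ((SSet.stdSimplex.objMk (OrderHom.const _ (Fin.last m)) : (Δ[m] : SSet.{0}).obj j))) := by
      intro hs
      obtain ⟨y, hy⟩ := hs 0
      have : (Fin.last m : Fin (m+1)).val = (0 : Fin (m+1)).val := congrArg Fin.val hy
      simp only [Fin.val_last, Fin.val_zero] at this
      omega
    refine (hF.bd2 j ((SSet.stdSimplex.objMk (OrderHom.const _ (Fin.last n)) : (Δ[n] : SSet.{0}).obj j),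
      (SSet.stdSimplex.objMk (OrderHom.const _ (Fin.last m)) : (Δ[m] : SSet.{0}).obj j)) hβc).trans ?_
    have := ConcreteCategory.congr_hom (NatTrans.congr_app hvert j) x
    rw [← this]
    show h₂.app j _ = h₂.app j _
    congr 1
  obtain ⟨ℓ, hℓ1, hℓ2⟩ := hu (d+1) (Nat.succ_pos d) t s hsquare hvtx
  refine ⟨ℓ, ?_, ?_⟩
  · intro j η hη
    exact ConcreteCategory.congr_hom (NatTrans.congr_app hℓ1 j)
      (⟨SSet.stdSimplex.objMk η, hη⟩ : (∂Δ[d+1] : SSet.{0}).obj j)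
  · intro j x
    exact ConcreteCategory.congr_hom (NatTrans.congr_app hℓ2 j) x

/-- the chosen filler for the core `τ` -/
noncomputable def liftMor (hu : IsUniversalVertex p u) (hm : 0 < m)
    (hvert : CartesianMonoidalCategory.lift (vertexMor n (Fin.last n))
        (bdryVertexMor m hm (Fin.last m)) ≫ h₂ = u)
    (F : Fam E n m) (d : ℕ) (hF : Inv p h₁ h₂ q F d)
    (τ : Elt n m (op ⦋d+1⦌)) (hτ : Interior τ) : (Δ[d+1] : SSet.{0}) ⟶ E :=
  (exists_lift p u h₁ h₂ q hu hm hvert F d hF τ hτ).choose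

lemma liftMor_spec₁ (hu : IsUniversalVertex p u) (hm : 0 < m)
    (hvert : CartesianMonoidalCategory.lift (vertexMor n (Fin.last n))
        (bdryVertexMor m hm (Fin.last m)) ≫ h₂ = u)
    (F : Fam E n m) (d : ℕ) (hF : Inv p h₁ h₂ q F d)
    (τ : Elt n m (op ⦋d+1⦌)) (hτ : Interior τ)
    (j : SimplexCategoryᵒᵖ) (η : Fin (j.unop.len + 1) →o Fin (d+2))
    (hη : ¬ Function.Surjective ⇑η) :
    (liftMor p u h₁ h₂ q hu hm hvert F d hF τ hτ).app j (SSet.stdSimplex.objMk η) =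
      F j (resElt τ η) :=
  (exists_lift p u h₁ h₂ q hu hm hvert F d hF τ hτ).choose_spec.1 j η hη

lemma liftMor_spec₂ (hu : IsUniversalVertex p u) (hm : 0 < m)
    (hvert : CartesianMonoidalCategory.lift (vertexMor n (Fin.last n))
        (bdryVertexMor m hm (Fin.last m)) ≫ h₂ = u)
    (F : Fam E n m) (d : ℕ) (hF : Inv p h₁ h₂ q F d)
    (τ : Elt n m (op ⦋d+1⦌)) (hτ : Interior τ)
    (j : SimplexCategoryᵒᵖ) (x : (Δ[d+1] : SSet.{0}).obj j) :
    p.app j ((liftMor p u h₁ h₂ q hu hm hvert F d hF τ hτ).app j x) =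
      q.app j (resElt τ (SSet.stdSimplex.asOrderHom x)) :=
  (exists_lift p u h₁ h₂ q hu hm hvert F d hF τ hτ).choose_spec.2 j x

lemma liftMor_congr (hu : IsUniversalVertex p u) (hm : 0 < m)
    (hvert : CartesianMonoidalCategory.lift (vertexMor n (Fin.last n))
        (bdryVertexMor m hm (Fin.last m)) ≫ h₂ = u)
    (F : Fam E n m) (d : ℕ) (hF : Inv p h₁ h₂ q F d)
    (τ τ' : Elt n m (op ⦋d+1⦌)) (hτ : Interior τ) (hτ' : Interior τ') (e : τ = τ') :
    liftMor p u h₁ h₂ q hu hm hvert F d hF τ hτ =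
      liftMor p u h₁ h₂ q hu hm hvert F d hF τ' hτ' := by
  subst e; rfl

variable (hu : IsUniversalVertex p u) (hm : 0 < m)
  (hvert : CartesianMonoidalCategory.lift (vertexMor n (Fin.last n))
      (bdryVertexMor m hm (Fin.last m)) ≫ h₂ = u)

open Classical in
/-- extend `F` over the interior simplices of rank `d+1` -/
noncomputable def step (F : Fam E n m) (d : ℕ) (hF : Inv p h₁ h₂ q F d) : Fam E n m :=
  fun j σ =>
    if h : Interior σ ∧ rkc σ = d + 2 then
      (liftMor p u h₁ h₂ q hu hm hvert F d hF (coreElt σ h.2)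
        (core_interior σ h.2 h.1)).app j (SSet.stdSimplex.objMk (thetaD σ h.2))
    else F j σ

lemma step_eq_of_InA (F : Fam E n m) (d : ℕ) (hF : Inv p h₁ h₂ q F d)
    {j} (σ : Elt n m j) (hσ : InA d σ) :
    step p u h₁ h₂ q hu hm hvert F d hF j σ = F j σ := by
  rw [step, dif_neg]
  rintro ⟨hi, hc⟩
  rcases hσ with h | h
  · exact h hi
  · omega

lemma step_eq_of_core (F : Fam E n m) (d : ℕ) (hF : Inv p h₁ h₂ q F d)
    {j} (σ : Elt n m j) (hi : Interior σ) (hc : rkc σ = d + 2) :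
    step p u h₁ h₂ q hu hm hvert F d hF j σ =
      (liftMor p u h₁ h₂ q hu hm hvert F d hF (coreElt σ hc)
        (core_interior σ hc hi)).app j (SSet.stdSimplex.objMk (thetaD σ hc)) :=
  dif_pos ⟨hi, hc⟩

lemma InA_succ_cases (d : ℕ) {j} (σ : Elt n m j) (hσ : InA (d+1) σ) :
    InA d σ ∨ (Interior σ ∧ rkc σ = d + 2) := by
  by_cases hi : Interior σ
  · rcases hσ with h | h
    · exact absurd hi h
    · rcases Nat.lt_or_ge (rkc σ) (d+2) with h2 | h2
      · exact Or.inl (Or.inr (by omega))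
      · exact Or.inr ⟨hi, by omega⟩
  · exact Or.inl (Or.inl hi)

lemma step_inv (hn : 0 < n) (F : Fam E n m) (d : ℕ) (hF : Inv p h₁ h₂ q F d) :
    Inv p h₁ h₂ q (step p u h₁ h₂ q hu hm hvert F d hF) (d+1) where
  bd1 := fun j σ hα => by
    rw [step_eq_of_InA p u h₁ h₂ q hu hm hvert F d hF σ (Or.inl (fun hi => hα hi.1))]
    exact hF.bd1 j σ hα
  bd2 := fun j σ hβ => by
    rw [step_eq_of_InA p u h₁ h₂ q hu hm hvert F d hF σ (Or.inl (fun hi => hβ hi.2))]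
    exact hF.bd2 j σ hβ
  proj := by
    intro j σ hσ
    rcases InA_succ_cases d σ hσ with h | ⟨hi, hc⟩
    · rw [step_eq_of_InA p u h₁ h₂ q hu hm hvert F d hF σ h]
      exact hF.proj j σ h
    · rw [step_eq_of_core p u h₁ h₂ q hu hm hvert F d hF σ hi hc,
        liftMor_spec₂ p u h₁ h₂ q hu hm hvert F d hF (coreElt σ hc) (core_interior σ hc hi) j _]
      rw [show resElt (coreElt σ hc)
        (SSet.stdSimplex.asOrderHom (SSet.stdSimplex.objMk (thetaD σ hc))) = σ from recomposition σ hc]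
  nat := by
    intro j j' g σ hσ
    rcases InA_succ_cases d σ hσ with h | ⟨hi, hc⟩
    · rw [step_eq_of_InA p u h₁ h₂ q hu hm hvert F d hF _ (InA_map d g σ h),
        step_eq_of_InA p u h₁ h₂ q hu hm hvert F d hF σ h]
      exact hF.nat g σ h
    · rw [step_eq_of_core p u h₁ h₂ q hu hm hvert F d hF σ hi hc]
      have hτi : Interior (coreElt σ hc) := core_interior σ hc hi
      have hmap : (((Δ[n] : SSet.{0}) ⊗ Δ[m]).map g σ) =
          resElt (coreElt σ hc) ((thetaD σ hc).comp g.unop.toOrderHom) := by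
        conv_lhs => rw [← recomposition σ hc]
        exact res_res (coreElt σ hc) g (thetaD σ hc)
      by_cases hsurj : Function.Surjective ⇑((thetaD σ hc).comp g.unop.toOrderHom)
      · -- the restriction is still an interior simplex of rank `d+1`
        have ha : ∀ x, aOH (coreElt σ hc) (((thetaD σ hc).comp g.unop.toOrderHom) x) =
            aOH (((Δ[n] : SSet.{0}) ⊗ Δ[m]).map g σ) x :=
          fun x => aOH_coreElt_thetaD σ hc (g.unop.toOrderHom x)
        have hb : ∀ x, bOH (coreElt σ hc) (((thetaD σ hc).comp g.unop.toOrderHom) x) =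
            bOH (((Δ[n] : SSet.{0}) ⊗ Δ[m]).map g σ) x :=
          fun x => bOH_coreElt_thetaD σ hc (g.unop.toOrderHom x)
        obtain ⟨hceq, hθeq, hcore⟩ := Fact.unique
          (aOH (((Δ[n] : SSet.{0}) ⊗ Δ[m]).map g σ)) (bOH (((Δ[n] : SSet.{0}) ⊗ Δ[m]).map g σ))
          ((thetaD σ hc).comp g.unop.toOrderHom) hsurj
          (aOH (coreElt σ hc)) (bOH (coreElt σ hc)) (core_joint_inj σ hc) ha hb
        have hc' : rkc (((Δ[n] : SSet.{0}) ⊗ Δ[m]).map g σ) = d + 2 := hceq.symm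
        have hi' : Interior (((Δ[n] : SSet.{0}) ⊗ Δ[m]).map g σ) := by
          constructor
          · intro v
            obtain ⟨w, hw⟩ := hτi.1 v
            obtain ⟨x, hx⟩ := hsurj w
            exact ⟨x, by rw [← ha x, hx, hw]⟩
          · intro v
            obtain ⟨w, hw⟩ := hτi.2 v
            obtain ⟨x, hx⟩ := hsurj w
            exact ⟨x, by rw [← hb x, hx, hw]⟩
        have hτeq : coreElt (((Δ[n] : SSet.{0}) ⊗ Δ[m]).map g σ) hc' = coreElt σ hc := by
          apply pelt_ext
          · refine OrderHom.ext _ _ (funext fun v => ?_)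
            rw [aOH_coreElt]
            exact ((hcore v (Fin.cast hc'.symm v) rfl).1).symm
          · refine OrderHom.ext _ _ (funext fun v => ?_)
            rw [bOH_coreElt]
            exact ((hcore v (Fin.cast hc'.symm v) rfl).2).symm
        have hθD : (SSet.stdSimplex.objMk (thetaD (((Δ[n] : SSet.{0}) ⊗ Δ[m]).map g σ) hc') :
              (Δ[d+1] : SSet.{0}).obj j') =
            SSet.stdSimplex.objMk ((thetaD σ hc).comp g.unop.toOrderHom) := by
          apply elt_ext
          refine OrderHom.ext _ _ (funext fun x => ?_)
          exact Fin.ext ((hθeq x).symm)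
        rw [step_eq_of_core p u h₁ h₂ q hu hm hvert F d hF _ hi' hc',
          liftMor_congr p u h₁ h₂ q hu hm hvert F d hF _ _
            (core_interior _ hc' hi') hτi hτeq, hθD]
        rw [show (SSet.stdSimplex.objMk ((thetaD σ hc).comp g.unop.toOrderHom) :
            (Δ[d+1] : SSet.{0}).obj j') =
          (Δ[d+1] : SSet.{0}).map g (SSet.stdSimplex.objMk (thetaD σ hc)) from rfl]
        exact ConcreteCategory.congr_hom ((liftMor p u h₁ h₂ q hu hm hvert F d hF (coreElt σ hc)
          hτi).naturality g) (SSet.stdSimplex.objMk (thetaD σ hc))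
      · -- the restriction falls back into the previous stage
        have hInA' : InA d (((Δ[n] : SSet.{0}) ⊗ Δ[m]).map g σ) := by
          rw [hmap]
          exact Or.inr (rkc_res_le (coreElt σ hc) _ hsurj)
        rw [step_eq_of_InA p u h₁ h₂ q hu hm hvert F d hF _ hInA', hmap,
          ← liftMor_spec₁ p u h₁ h₂ q hu hm hvert F d hF (coreElt σ hc) hτi j' _ hsurj]
        rw [show (SSet.stdSimplex.objMk ((thetaD σ hc).comp g.unop.toOrderHom) :
            (Δ[d+1] : SSet.{0}).obj j') =
          (Δ[d+1] : SSet.{0}).map g (SSet.stdSimplex.objMk (thetaD σ hc)) from rfl]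
        exact ConcreteCategory.congr_hom ((liftMor p u h₁ h₂ q hu hm hvert F d hF (coreElt σ hc)
          hτi).naturality g) (SSet.stdSimplex.objMk (thetaD σ hc))

variable (hn : 0 < n)
  (hglue : ((∂Δ[n] : SSet.{0}) ◁ (∂Δ[m]).ι) ≫ h₁ =
      ((∂Δ[n]).ι ▷ (∂Δ[m] : SSet.{0})) ≫ h₂)
  (hk₁ : h₁ ≫ p = ((∂Δ[n]).ι ▷ (Δ[m] : SSet.{0})) ≫ q)
  (hk₂ : h₂ ≫ p = ((Δ[n] : SSet.{0}) ◁ (∂Δ[m]).ι) ≫ q)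

/-- the `d`-th stage of the skeletal induction -/
noncomputable def famAt : (d : ℕ) → {F : Fam E n m // Inv p h₁ h₂ q F d} := fun d => match d with
  | 0 => ⟨F0 u h₁ h₂, inv0 p u h₁ h₂ q hn hglue hk₁ hk₂⟩
  | d+1 => ⟨step p u h₁ h₂ q hu hm hvert
      (famAt d).1 d (famAt d).2,
    step_inv p u h₁ h₂ q hu hm hvert hn (famAt d).1 d (famAt d).2⟩

end Build

end Main

theorem fill_boundary_prod_of_universal_vertex'
    {E X : SSet.{0}} (p : E ⟶ X) (u : (Δ[0] : SSet.{0}) ⟶ E)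
    (hu : IsUniversalVertex p u)
    (n m : ℕ) (hn : 0 < n) (hm : 0 < m)
    (h₁ : ((∂Δ[n] : SSet.{0}) ⊗ Δ[m]) ⟶ E)
    (h₂ : ((Δ[n] : SSet.{0}) ⊗ ∂Δ[m]) ⟶ E)
    (k : ((Δ[n] : SSet.{0}) ⊗ Δ[m]) ⟶ X)
    (hglue : ((∂Δ[n] : SSet.{0}) ◁ (∂Δ[m]).ι) ≫ h₁ =
      ((∂Δ[n]).ι ▷ (∂Δ[m] : SSet.{0})) ≫ h₂)
    (hk₁ : h₁ ≫ p = ((∂Δ[n]).ι ▷ (Δ[m] : SSet.{0})) ≫ k)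
    (hk₂ : h₂ ≫ p = ((Δ[n] : SSet.{0}) ◁ (∂Δ[m]).ι) ≫ k)
    (hvert : CartesianMonoidalCategory.lift (vertexMor n (Fin.last n))
        (bdryVertexMor m hm (Fin.last m)) ≫ h₂ = u) :
    ∃ hbar : ((Δ[n] : SSet.{0}) ⊗ Δ[m]) ⟶ E,
      ((∂Δ[n]).ι ▷ (Δ[m] : SSet.{0})) ≫ hbar = h₁ ∧
      ((Δ[n] : SSet.{0}) ◁ (∂Δ[m]).ι) ≫ hbar = h₂ ∧
      hbar ≫ p = k := by
  obtain ⟨F, hF⟩ := famAt p u h₁ h₂ k hu hm hvert hn hglue hk₁ hk₂ (n+m)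
  have hall : ∀ (j : SimplexCategoryᵒᵖ) (σ : Elt n m j), InA (n+m) σ := by
    intro j σ
    have := rkc_le σ
    exact Or.inr (by omega)
  refine ⟨{ app := fun j => TypeCat.ofHom fun σ => F j σ,
            naturality := fun j j' g => ConcreteCategory.hom_ext _ _ fun σ => hF.nat g σ (hall j σ) }, ?_, ?_, ?_⟩
  · ext j x
    show F j (x.1.1, x.2) = h₁.app j x
    rw [hF.bd1 j (x.1.1, x.2) x.1.2]
    rfl
  · ext j x
    show F j (x.1, x.2.1) = h₂.app j x
    rw [hF.bd2 j (x.1, x.2.1) x.2.2]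
    rfl
  · ext j σ
    exact hF.proj j σ (hall j σ)


theorem fill_boundary_prod_of_universal_vertex
    {E X : SSet.{0}} (p : E ⟶ X) (u : (Δ[0] : SSet.{0}) ⟶ E)
    (hu : IsUniversalVertex p u)
    (n m : ℕ) (hn : 0 < n) (hm : 0 < m)
    (h₁ : ((∂Δ[n] : SSet.{0}) ⊗ Δ[m]) ⟶ E)
    (h₂ : ((Δ[n] : SSet.{0}) ⊗ ∂Δ[m]) ⟶ E)
    (k : ((Δ[n] : SSet.{0}) ⊗ Δ[m]) ⟶ X)
    -- `h₁` and `h₂` agree on `∂Δ[n] ⊗ ∂Δ[m]`, hence glue to `h : ∂(Δ[n] × Δ[m]) ⟶ E`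
    (hglue : ((∂Δ[n] : SSet.{0}) ◁ (∂Δ[m]).ι) ≫ h₁ =
      ((∂Δ[n]).ι ▷ (∂Δ[m] : SSet.{0})) ≫ h₂)
    -- `p ∘ h = k ∘ ι`
    (hk₁ : h₁ ≫ p = ((∂Δ[n]).ι ▷ (Δ[m] : SSet.{0})) ≫ k)
    (hk₂ : h₂ ≫ p = ((Δ[n] : SSet.{0}) ◁ (∂Δ[m]).ι) ≫ k)
    -- `h` sends the vertex `(n, m)` to `u`
    (hvert : CartesianMonoidalCategory.lift (vertexMor n (Fin.last n))
        (bdryVertexMor m hm (Fin.last m)) ≫ h₂ = u) :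
    ∃ hbar : ((Δ[n] : SSet.{0}) ⊗ Δ[m]) ⟶ E,
      ((∂Δ[n]).ι ▷ (Δ[m] : SSet.{0})) ≫ hbar = h₁ ∧
      ((Δ[n] : SSet.{0}) ◁ (∂Δ[m]).ι) ≫ hbar = h₂ ∧
      hbar ≫ p = k :=
  fill_boundary_prod_of_universal_vertex' p u hu n m hn hm h₁ h₂ k hglue hk₁ hk₂ hvert

end Stmt8
end
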